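/- arXiv:1608.08045 — 8 statements merged into one kernel-verified Lean document; each statement's English description precedes it below -/
import Mathlib

section
/- Let Λ be a finite simple graph in which every vertex has degree at least 3, and let (u,v) be a dart of Λ. Then (u,v) is the beginning of some balloon in Λ; that is, there exists a balloon [a₀, a₁, ..., a_s] in Λ with a₀ = u and a₁ = v. -/
/-- `a 0, a 1, ..., a s` is an `s`-arc of `Λ`: a walk of length `s` in which no
two of any three consecutive vertices coincide. -/
def IsArc {V : Type*} (Λ : SimpleGraph V) (s : ℕ) (a : ℕ → V) : Prop :=
  (∀ i < s, Λ.Adj (a i) (a (i + 1))) ∧ ∀ i, i + 2 ≤ s → a (i + 2) ≠ a i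

/-- `a 0, a 1, ..., a s` is a balloon of `Λ`: an `s`-arc in which
`a 0, ..., a (s-1)` are pairwise distinct and `a s = a i` for some
`i ∈ {1, ..., s - 3}`. -/
def IsBalloon {V : Type*} (Λ : SimpleGraph V) (s : ℕ) (a : ℕ → V) : Prop :=
  IsArc Λ s a ∧ (∀ i j, i < j → j < s → a i ≠ a j) ∧
    ∃ i, 1 ≤ i ∧ i + 3 ≤ s ∧ a s = a i

/-- In a finite simple graph of minimum degree at least 3, every dart `(u, v)`
is the beginning of some balloon. -/
theorem dart_is_beginning_of_balloon {V : Type*} [Fintype V] (Λ : SimpleGraph V)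
    [DecidableRel Λ.Adj] (hdeg : ∀ v : V, 3 ≤ Λ.degree v) (u v : V)
    (hadj : Λ.Adj u v) :
    ∃ (s : ℕ) (a : ℕ → V), IsBalloon Λ s a ∧ a 0 = u ∧ a 1 = v := by
  classical
  set P : ℕ → Prop := fun n => ∃ a : ℕ → V, a 0 = u ∧ a 1 = v ∧
    (∀ i < n, Λ.Adj (a i) (a (i+1))) ∧ (∀ i j, i < j → j ≤ n → a i ≠ a j) with hP
  have hP1 : P 1 := by
    refine ⟨fun i => if i = 0 then u else v, by simp, by simp, ?_, ?_⟩
    · intro i hi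
      interval_cases i
      simpa using hadj
    · intro i j hij hj
      obtain ⟨rfl, rfl⟩ : i = 0 ∧ j = 1 := by omega
      simpa using hadj.ne
  have hcard : ∀ m, P m → m + 1 ≤ Fintype.card V := by
    rintro m ⟨a, -, -, -, hinj⟩
    have hinj' : Function.Injective (fun i : Fin (m+1) => a i) := by
      intro i j hij
      by_contra hne
      rcases lt_or_gt_of_ne (fun h : (i : ℕ) = j => hne (Fin.ext h)) with h | h
      · exact hinj i j h (Nat.lt_succ_iff.mp j.isLt) hij
      · exact hinj j i h (Nat.lt_succ_iff.mp i.isLt) hij.symm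
    simpa using Fintype.card_le_of_injective _ hinj'
  have h1card : 1 ≤ Fintype.card V := by have := hcard 1 hP1; omega
  set n := Nat.findGreatest P (Fintype.card V) with hn
  have hn1 : 1 ≤ n := Nat.le_findGreatest h1card hP1
  have hPn : P n := Nat.findGreatest_spec h1card hP1
  have hmax : ¬ P (n + 1) := by
    intro hPn1
    have h2 := hcard (n+1) hPn1
    exact Nat.findGreatest_is_greatest (Nat.lt_succ_self n) (by omega) hPn1
  obtain ⟨a, ha0, ha1, hadjs, hinj⟩ := hPn
  -- every neighbor of `a n` is on the path
  have himg : ∀ x, Λ.Adj (a n) x → ∃ i, i ≤ n ∧ x = a i := by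
    intro x hx
    by_contra hno
    push_neg at hno
    apply hmax
    refine ⟨fun i => if i ≤ n then a i else x, by simp [ha0], by simp [hn1, ha1], ?_, ?_⟩
    · intro i hi
      rcases Nat.lt_or_ge i n with h | h
      · simp only [if_pos (le_of_lt h), if_pos (Nat.succ_le_of_lt h)]
        exact hadjs i h
      · have hin : i = n := by omega
        subst hin
        simp only [if_pos le_rfl, if_neg (by omega : ¬ n + 1 ≤ n)]
        exact hx
    · intro i j hij hj
      rcases Nat.lt_or_ge n j with h | h
      · have hjn : j = n + 1 := by omega
        subst hjn
        simp only [if_pos (by omega : i ≤ n), if_neg (by omega : ¬ n + 1 ≤ n)]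
        exact fun he => hno i (by omega) he.symm
      · simp only [if_pos (by omega : i ≤ n), if_pos h]
        exact hinj i j hij h
  -- find an interior neighbor
  have hkey : ∃ i, 1 ≤ i ∧ i + 2 ≤ n ∧ Λ.Adj (a n) (a i) := by
    by_contra hno
    push_neg at hno
    have hsub : Λ.neighborFinset (a n) ⊆ {a 0, a (n-1)} := by
      intro x hx
      rw [SimpleGraph.mem_neighborFinset] at hx
      obtain ⟨i, hi, rfl⟩ := himg x hx
      have hine : i ≠ n := fun h => (Λ.irrefl (h ▸ hx)).elim
      have : i = 0 ∨ i = n - 1 := by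
        rcases Nat.eq_zero_or_pos i with h0 | h0
        · left; exact h0
        · have hne2 : ¬ (i + 2 ≤ n) := fun h => hno i h0 h hx
          right; omega
      rcases this with h | h <;> simp [h]
    have h3 := hdeg (a n)
    rw [← SimpleGraph.card_neighborFinset_eq_degree] at h3
    have := Finset.card_le_card hsub
    have h2 : ({a 0, a (n-1)} : Finset V).card ≤ 2 := Finset.card_insert_le _ _ |>.trans (by simp)
    omega
  obtain ⟨i₀, hi₀1, hi₀2, hi₀adj⟩ := hkey
  refine ⟨n + 1, fun i => if i ≤ n then a i else a i₀, ⟨⟨?_, ?_⟩, ?_, ⟨i₀, hi₀1, by omega, ?_⟩⟩,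
    by simp [ha0], by simp [hn1, ha1]⟩
  · intro i hi
    rcases Nat.lt_or_ge i n with h | h
    · simp only [if_pos (le_of_lt h), if_pos (Nat.succ_le_of_lt h)]
      exact hadjs i h
    · have hin : i = n := by omega
      subst hin
      simp only [if_pos le_rfl, if_neg (by omega : ¬ n + 1 ≤ n)]
      exact hi₀adj
  · intro j hj
    rcases Nat.lt_or_ge n (j + 2) with h | h
    · have : j + 2 = n + 1 := by omega
      rw [this]
      simp only [if_neg (by omega : ¬ n + 1 ≤ n), if_pos (by omega : j ≤ n)]
      exact fun he => hinj i₀ j (by omega) (by omega) he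
    · simp only [if_pos h, if_pos (by omega : j ≤ n)]
      exact fun he => hinj j (j+2) (by omega) h he.symm
  · intro i j hij hj
    simp only [if_pos (by omega : i ≤ n), if_pos (by omega : j ≤ n)]
    exact hinj i j hij (by omega)
  · simp only [if_neg (by omega : ¬ n + 1 ≤ n), if_pos (by omega : i₀ ≤ n)]
end

section
/- Let Λ be a finite simple graph in which every vertex has degree at least 3. Then the greatest common divisor of the lengths of all arc-cycles in Λ is at most 2; that is, every positive integer that divides the length of every arc-cycle of Λ is at most 2. -/
/-- `a 0, a 1, ..., a s` is an arc-cycle of `Λ` of length `s`: a closed walk of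
positive length which is an `s`-arc and moreover `a (s-1) ≠ a 1`. -/
def IsArcCycle {V : Type*} (Λ : SimpleGraph V) (s : ℕ) (a : ℕ → V) : Prop :=
  1 ≤ s ∧ IsArc Λ s a ∧ a s = a 0 ∧ a (s - 1) ≠ a 1

namespace ArcAux

variable {V : Type*} {Λ : SimpleGraph V}

/-- There is an arc of length `n` whose first dart is `e` and last dart is `f`. -/
def ArcFT (Λ : SimpleGraph V) (n : ℕ) (e f : V × V) : Prop :=
  1 ≤ n ∧ ∃ a : ℕ → V, IsArc Λ n a ∧ a 0 = e.1 ∧ a 1 = e.2 ∧ a (n - 1) = f.1 ∧ a n = f.2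

lemma ArcFT.one_le {n : ℕ} {e f : V × V} (h : ArcFT Λ n e f) : 1 ≤ n := h.1

lemma ArcFT.adj_right {n : ℕ} {e f : V × V} (h : ArcFT Λ n e f) : Λ.Adj f.1 f.2 := by
  obtain ⟨hn, a, ⟨hadj, _⟩, _, _, h3, h4⟩ := h
  have h5 := hadj (n - 1) (by omega)
  rw [show n - 1 + 1 = n by omega] at h5
  rwa [h3, h4] at h5

lemma arcFT_self (e : V × V) (h : Λ.Adj e.1 e.2) : ArcFT Λ 1 e e := by
  refine ⟨le_rfl, fun i => if i = 0 then e.1 else e.2, ⟨?_, ?_⟩, by simp, by simp, by simp, by simp⟩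
  · intro i hi
    interval_cases i
    simpa using h
  · intro i hi
    omega

lemma arcFT_two {x y z : V} (hxy : Λ.Adj x y) (hyz : Λ.Adj y z) (hzx : z ≠ x) :
    ArcFT Λ 2 (x, y) (y, z) := by
  refine ⟨by norm_num, fun i => if i = 0 then x else if i = 1 then y else z,
    ⟨?_, ?_⟩, by simp, by simp, by simp, by simp⟩
  · intro i hi
    interval_cases i
    · simpa using hxy
    · simpa using hyz
  · intro i hi
    have : i = 0 := by omega
    subst this
    simpa using hzx

lemma ArcFT.comp {m r : ℕ} {e f g : V × V} (h1 : ArcFT Λ m e f) (h2 : ArcFT Λ r f g) :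
    ArcFT Λ (m + r - 1) e g := by
  obtain ⟨hm, a, ⟨haadj, hanb⟩, ha0, ha1, ham1, ham⟩ := h1
  obtain ⟨hr, b, ⟨hbadj, hbnb⟩, hb0, hb1, hbr1, hbr⟩ := h2
  set c : ℕ → V := fun i => if i < m then a i else b (i - (m - 1)) with hc
  have hca : ∀ i, i ≤ m → c i = a i := by
    intro i hi
    by_cases h : i < m
    · simp only [hc, if_pos h]
    · have hieq : i = m := by omega
      simp only [hc, if_neg h, hieq]
      rw [show m - (m - 1) = 1 by omega, hb1, ham]
      simp
  have hcb : ∀ i, m - 1 ≤ i → c i = b (i - (m - 1)) := by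
    intro i hi
    by_cases h : i < m
    · have hieq : i = m - 1 := by omega
      simp only [hc, if_pos h, hieq]
      rw [show m - 1 - (m - 1) = 0 by omega, hb0, ham1]
      simp
    · simp only [hc, if_neg h]
  refine ⟨by omega, c, ⟨?_, ?_⟩, ?_, ?_, ?_, ?_⟩
  · intro i hi
    by_cases h : i + 1 ≤ m - 1
    · rw [hca i (by omega), hca (i + 1) (by omega)]
      exact haadj i (by omega)
    · rw [hcb i (by omega), hcb (i + 1) (by omega),
        show i + 1 - (m - 1) = (i - (m - 1)) + 1 by omega]
      exact hbadj _ (by omega)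
  · intro i hi
    by_cases h : i + 2 ≤ m
    · rw [hca i (by omega), hca (i + 2) (by omega)]
      exact hanb i h
    · rw [hcb i (by omega), hcb (i + 2) (by omega),
        show i + 2 - (m - 1) = (i - (m - 1)) + 2 by omega]
      exact hbnb _ (by omega)
  · rw [hca 0 (by omega)]; exact ha0
  · rw [hca 1 (by omega)]; exact ha1
  · rw [hcb (m + r - 1 - 1) (by omega), show m + r - 1 - 1 - (m - 1) = r - 1 by omega]
    exact hbr1
  · rw [hcb (m + r - 1) (by omega), show m + r - 1 - (m - 1) = r by omega]
    exact hbr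

lemma ArcFT.trunc {n : ℕ} {e f : V × V} (h : ArcFT Λ n e f) (hn : 2 ≤ n) :
    ∃ w, ArcFT Λ (n - 1) e (w, f.1) ∧ w ≠ f.2 := by
  obtain ⟨h1, a, ⟨hadj, hnb⟩, h0, h1', h2, h3⟩ := h
  refine ⟨a (n - 2), ⟨by omega, a, ⟨fun i hi => hadj i (by omega), fun i hi => hnb i (by omega)⟩,
    h0, h1', ?_, ?_⟩, ?_⟩
  · rw [show n - 1 - 1 = n - 2 by omega]
  · exact h2
  · rw [← h3]
    have h5 := hnb (n - 2) (by omega)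
    rw [show n - 2 + 2 = n by omega] at h5
    exact h5.symm

/-- Gluing an arc from `e` to `f` with an arc from `f` back to `e` gives an
arc-cycle of length `m + r - 2`; hence `d` divides `m + r - 2`. -/
lemma dvd_round {d : ℕ} (H : ∀ (s : ℕ) (a : ℕ → V), IsArcCycle Λ s a → d ∣ s)
    {m r : ℕ} {e f : V × V} (h1 : ArcFT Λ m e f) (h2 : ArcFT Λ r f e) :
    d ∣ m + r - 2 := by
  have hm := h1.one_le
  have hr := h2.one_le
  by_cases hs : m + r - 2 = 0
  · simp [hs]
  obtain ⟨hn, a, ⟨hadj, hnb⟩, h0, h1', h2', h3'⟩ := h1.comp h2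
  apply H (m + r - 2) a
  refine ⟨by omega, ⟨fun i hi => hadj i (by omega), fun i hi => hnb i (by omega)⟩, ?_, ?_⟩
  · rw [show m + r - 2 = m + r - 1 - 1 by omega, h2', h0]
  · have hx := hnb (m + r - 3) (by omega)
    rw [show m + r - 3 + 2 = m + r - 1 by omega, h3'] at hx
    rw [show m + r - 2 - 1 = m + r - 3 by omega, h1']
    exact fun hh => hx hh.symm

/-- Reachability in the dart digraph. -/
def Reach (Λ : SimpleGraph V) (e f : V × V) : Prop := ∃ n, ArcFT Λ n e f

lemma Reach.trans {e f g : V × V} (h1 : Reach Λ e f) (h2 : Reach Λ f g) : Reach Λ e g := by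
  obtain ⟨m, hm⟩ := h1
  obtain ⟨r, hr⟩ := h2
  exact ⟨m + r - 1, hm.comp hr⟩

lemma reach_self {e : V × V} (h : Λ.Adj e.1 e.2) : Reach Λ e e := ⟨1, arcFT_self e h⟩

lemma Reach.adj_right {e f : V × V} (h : Reach Λ e f) : Λ.Adj f.1 f.2 :=
  h.choose_spec.adj_right

/-- There is a dart `e`, reachable from `e0`, which is "maximal": everything it
reaches, reaches it back. -/
lemma exists_max [Fintype V] (e0 : V × V) (h0 : Λ.Adj e0.1 e0.2) :
    ∃ e, Reach Λ e0 e ∧ ∀ f, Reach Λ e f → Reach Λ f e := by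
  classical
  suffices h : ∀ (k : ℕ) (e : V × V), Λ.Adj e.1 e.2 →
      (Finset.univ.filter (fun f => Reach Λ e f ∧ ¬ Reach Λ f e)).card ≤ k →
      ∃ e', Reach Λ e e' ∧ ∀ f, Reach Λ e' f → Reach Λ f e' from h _ e0 h0 le_rfl
  intro k
  induction k with
  | zero =>
    intro e he hcard
    refine ⟨e, reach_self he, fun f hf => ?_⟩
    by_contra hnf
    have hmem : f ∈ Finset.univ.filter (fun f => Reach Λ e f ∧ ¬ Reach Λ f e) := by
      simp [hf, hnf]
    have := Finset.card_pos.mpr ⟨f, hmem⟩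
    omega
  | succ k ih =>
    intro e he hcard
    by_cases hbad : (Finset.univ.filter (fun f => Reach Λ e f ∧ ¬ Reach Λ f e)).Nonempty
    · obtain ⟨f, hf⟩ := hbad
      simp only [Finset.mem_filter, Finset.mem_univ, true_and] at hf
      obtain ⟨hef, hnfe⟩ := hf
      have hfadj : Λ.Adj f.1 f.2 := hef.adj_right
      have hsub : (Finset.univ.filter (fun g => Reach Λ f g ∧ ¬ Reach Λ g f)) ⊆
          (Finset.univ.filter (fun g => Reach Λ e g ∧ ¬ Reach Λ g e)) := by
        intro g hg
        simp only [Finset.mem_filter, Finset.mem_univ, true_and] at hg ⊢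
        exact ⟨hef.trans hg.1, fun hge => hg.2 (hge.trans hef)⟩
      have hfnot : f ∉ (Finset.univ.filter (fun g => Reach Λ f g ∧ ¬ Reach Λ g f)) := by
        simp [reach_self hfadj]
      have hfmem : f ∈ (Finset.univ.filter (fun g => Reach Λ e g ∧ ¬ Reach Λ g e)) := by
        simp [hef, hnfe]
      have hlt := Finset.card_lt_card ⟨hsub, fun hsup => hfnot (hsup hfmem)⟩
      obtain ⟨e', h1, h2⟩ := ih f hfadj (by omega)
      exact ⟨e', hef.trans h1, h2⟩
    · refine ⟨e, reach_self he, fun f hf => ?_⟩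
      by_contra hnf
      exact hbad ⟨f, by simp [hf, hnf]⟩

/-- If every vertex has degree at least 3, then from any two "forbidden"
vertices there is still a neighbour avoiding both. -/
lemma exists_third [Fintype V] (Λ : SimpleGraph V) [DecidableRel Λ.Adj]
    (hdeg : ∀ v : V, 3 ≤ Λ.degree v) (y x w : V) :
    ∃ z, Λ.Adj y z ∧ z ≠ x ∧ z ≠ w := by
  classical
  by_contra hc
  push_neg at hc
  have hsub : Λ.neighborFinset y ⊆ {x, w} := by
    intro z hz
    rw [SimpleGraph.mem_neighborFinset] at hz
    simp only [Finset.mem_insert, Finset.mem_singleton]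
    by_cases hzx : z = x
    · exact Or.inl hzx
    · exact Or.inr (hc z hz hzx)
  have h3 := Finset.card_le_card hsub
  have h4 : ({x, w} : Finset V).card ≤ 2 := by
    apply le_trans (Finset.card_insert_le _ _)
    simp
  have h5 := hdeg y
  rw [← SimpleGraph.card_neighborFinset_eq_degree] at h5
  omega

end ArcAux

open ArcAux

/-- In a finite simple graph of minimum degree at least 3, the greatest common
divisor of the lengths of all arc-cycles is at most 2: every positive integer
dividing the length of every arc-cycle is at most 2. -/
theorem gcd_arcCycle_lengths_le_two {V : Type*} [Fintype V] [Nonempty V]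
    (Λ : SimpleGraph V)
    [DecidableRel Λ.Adj] (hdeg : ∀ v : V, 3 ≤ Λ.degree v) :
    ∀ d : ℕ, 0 < d → (∀ (s : ℕ) (a : ℕ → V), IsArcCycle Λ s a → d ∣ s) →
      d ≤ 2 := by
  classical
  intro d hd H
  -- a base dart
  obtain ⟨v⟩ := ‹Nonempty V›
  obtain ⟨u, hu, -, -⟩ := exists_third Λ hdeg v v v
  obtain ⟨E, hE0, hEmax⟩ := exists_max (Λ := Λ) (v, u) hu
  have hEadj : Λ.Adj E.1 E.2 := hE0.adj_right
  set S : Finset (V × V) := Finset.univ.filter (fun f => Reach Λ E f) with hSdef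
  have hmemS : ∀ f, f ∈ S ↔ Reach Λ E f := by
    intro f; simp [hSdef]
  have hES : E ∈ S := (hmemS E).mpr (reach_self hEadj)
  have hSadj : ∀ f ∈ S, Λ.Adj f.1 f.2 := fun f hf => ((hmemS f).mp hf).adj_right
  have hSsucc : ∀ f ∈ S, ∀ z, Λ.Adj f.2 z → z ≠ f.1 → (f.2, z) ∈ S := by
    intro f hf z hz hzx
    refine (hmemS _).mpr (((hmemS f).mp hf).trans ⟨2, ?_⟩)
    have h2 := arcFT_two (Λ := Λ) (hSadj f hf) hz hzx
    rwa [Prod.mk.eta] at h2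
  have hSret : ∀ f ∈ S, Reach Λ f E := fun f hf => hEmax f ((hmemS f).mp hf)
  -- every element of S is reachable from E by an arc of length at least 2
  have hlong : ∀ f ∈ S, ∃ m, 2 ≤ m ∧ ArcFT Λ m E f := by
    intro f hf
    obtain ⟨n, hA⟩ := (hmemS f).mp hf
    obtain ⟨z, hz, hzx, -⟩ := exists_third Λ hdeg f.2 f.1 f.1
    have hsucc : (f.2, z) ∈ S := hSsucc f hf z hz hzx
    obtain ⟨b, hB⟩ := hSret _ hsucc
    have h2 : ArcFT Λ 2 f (f.2, z) := by
      have h2' := arcFT_two (Λ := Λ) (hSadj f hf) hz hzx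
      rwa [Prod.mk.eta] at h2'
    have hcomp := ((hA.comp h2).comp hB).comp hA
    refine ⟨_, ?_, hcomp⟩
    have hn1 := hA.one_le
    have hb1 := hB.one_le
    omega
  -- S contains a dart together with its reverse
  have hrev : ∃ f ∈ S, (f.2, f.1) ∈ S := by
    by_contra hR
    push_neg at hR
    -- tails of S-darts into a common head agree
    have hinj : ∀ f ∈ S, ∀ g ∈ S, f.2 = g.2 → f = g := by
      intro f hf g hg h2
      by_contra hne
      have h1 : f.1 ≠ g.1 := fun h1 => hne (Prod.ext h1 h2)
      have hmem : (g.2, f.1) ∈ S := by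
        refine hSsucc g hg f.1 ?_ h1
        rw [← h2]
        exact (hSadj f hf).symm
      rw [← h2] at hmem
      exact hR f hf hmem
    -- each dart of S has two distinct successors in S
    have htwo : ∀ f : V × V, ∃ z₁ z₂ : V, z₁ ≠ z₂ ∧
        (f ∈ S → (f.2, z₁) ∈ S ∧ (f.2, z₂) ∈ S) := by
      intro f
      obtain ⟨w₁, hw1, hw1x, -⟩ := exists_third Λ hdeg f.2 f.1 f.1
      obtain ⟨w₂, hw2, hw2x, hw21⟩ := exists_third Λ hdeg f.2 f.1 w₁
      exact ⟨w₁, w₂, Ne.symm hw21,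
        fun hf => ⟨hSsucc f hf _ hw1 hw1x, hSsucc f hf _ hw2 hw2x⟩⟩
    choose z₁ z₂ hzne hzS using htwo
    -- an injection S × Bool ↪ S, contradiction
    let F : {f // f ∈ S} × Bool → {f // f ∈ S} := fun p =>
      if p.2 then ⟨(p.1.1.2, z₁ p.1.1), ((hzS p.1.1) p.1.2).1⟩
      else ⟨(p.1.1.2, z₂ p.1.1), ((hzS p.1.1) p.1.2).2⟩
    have hFinj : Function.Injective F := by
      rintro ⟨⟨f, hf⟩, b⟩ ⟨⟨g, hg⟩, b'⟩ hFeq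
      cases b <;> cases b' <;>
        simp only [F, if_true, if_false, Bool.true_eq_false, Bool.false_eq_true,
          Subtype.mk.injEq, Prod.mk.injEq] at hFeq
      · have hfg : f = g := hinj f hf g hg hFeq.1
        subst hfg
        simp
      · have hfg : f = g := hinj f hf g hg hFeq.1
        subst hfg
        exact absurd hFeq.2.symm (hzne f)
      · have hfg : f = g := hinj f hf g hg hFeq.1
        subst hfg
        exact absurd hFeq.2 (hzne f)
      · have hfg : f = g := hinj f hf g hg hFeq.1
        subst hfg
        simp
    have hcard := Fintype.card_le_of_injective F hFinj
    rw [Fintype.card_prod, Fintype.card_bool, Fintype.card_coe] at hcard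
    have hpos : 0 < S.card := Finset.card_pos.mpr ⟨E, hES⟩
    omega
  obtain ⟨f, hfS, hfrev⟩ := hrev
  obtain ⟨x, y⟩ := f
  have hxy : Λ.Adj x y := hSadj _ hfS
  obtain ⟨m, hm2, hA⟩ := hlong (x, y) hfS
  obtain ⟨m', hm'2, hB⟩ := hlong (y, x) hfrev
  obtain ⟨u', hU, hu'y⟩ := hA.trunc hm2
  obtain ⟨w', hW, hw'x⟩ := hB.trunc hm'2
  obtain ⟨z, hyz, hzx, hzw⟩ := exists_third Λ hdeg y x w'
  obtain ⟨t, hxt, hty, htu⟩ := exists_third Λ hdeg x y u'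
  -- two arcs from E to (y, z), of lengths m + 1 and m'
  have hYZa : ArcFT Λ (m + 1) E (y, z) := by
    have hcomp := hA.comp (arcFT_two hxy hyz hzx)
    rwa [show m + 2 - 1 = m + 1 by omega] at hcomp
  have hYZb : ArcFT Λ m' E (y, z) := by
    have hcomp := hW.comp (arcFT_two hW.adj_right hyz hzw)
    rwa [show m' - 1 + 2 - 1 = m' by omega] at hcomp
  -- two arcs from E to (x, t), of lengths m' + 1 and m
  have hXTa : ArcFT Λ (m' + 1) E (x, t) := by
    have hcomp := hB.comp (arcFT_two hxy.symm hxt hty)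
    rwa [show m' + 2 - 1 = m' + 1 by omega] at hcomp
  have hXTb : ArcFT Λ m E (x, t) := by
    have hcomp := hU.comp (arcFT_two hU.adj_right hxt htu)
    rwa [show m - 1 + 2 - 1 = m by omega] at hcomp
  -- returns to E
  have hYZS : (y, z) ∈ S := hSsucc (x, y) hfS z hyz hzx
  have hXTS : (x, t) ∈ S := hSsucc (y, x) hfrev t hxt hty
  obtain ⟨r₁, hr1⟩ := hSret _ hYZS
  obtain ⟨r₂, hr2⟩ := hSret _ hXTS
  have D1 := dvd_round H hYZa hr1
  have D2 := dvd_round H hYZb hr1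
  have D3 := dvd_round H hXTa hr2
  have D4 := dvd_round H hXTb hr2
  have hr1' := hr1.one_le
  have hr2' := hr2.one_le
  have key : d ∣ 2 := by
    have e1 : d ∣ (m + 1 + r₁ - 2) + (m' + 1 + r₂ - 2) := Nat.dvd_add D1 D3
    have e2 : d ∣ (m' + r₁ - 2) + (m + r₂ - 2) := Nat.dvd_add D2 D4
    have e3 : (m + 1 + r₁ - 2) + (m' + 1 + r₂ - 2) = ((m' + r₁ - 2) + (m + r₂ - 2)) + 2 := by
      omega
    rw [e3] at e1
    exact (Nat.dvd_add_right e2).mp e1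
  exact Nat.le_of_dvd (by norm_num) key
end

section
/- If Λ is a connected finite simple graph in which every vertex has degree at least 3, then the dart digraph D(Λ) is strongly connected: for any two darts x and y of Λ there is a directed walk in D(Λ) from x to y. -/
/-- `(x, y)` is a 2-dart of `Λ`: the terminal vertex of `x` equals the initial
vertex of `y`, and the initial vertex of `x` differs from the terminal vertex of `y`.
This is exactly the dart relation of the dart digraph `D(Λ)`. -/
def IsTwoDart {V : Type*} (Λ : SimpleGraph V) (x y : Λ.Dart) : Prop :=
  x.toProd.2 = y.toProd.1 ∧ x.toProd.1 ≠ y.toProd.2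

/-- Dart reversal is an anti-isomorphism of the 2-dart relation. -/
lemma IsTwoDart.mirror {V : Type*} {Λ : SimpleGraph V} {x y : Λ.Dart}
    (h : IsTwoDart Λ x y) : IsTwoDart Λ y.symm x.symm := by
  obtain ⟨h1, h2⟩ := h
  refine ⟨?_, ?_⟩ <;> simp [SimpleGraph.Dart.symm_toProd, h1.symm]
  exact fun hc => h2 hc.symm

/-- Dart reversal anti-isomorphism, for reachability. -/
lemma mirrorR {V : Type*} {Λ : SimpleGraph V} {x y : Λ.Dart}
    (h : Relation.ReflTransGen (IsTwoDart Λ) x y) :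
    Relation.ReflTransGen (IsTwoDart Λ) y.symm x.symm := by
  induction h with
  | refl => exact .refl
  | tail _ hbc ih => exact Relation.ReflTransGen.head hbc.mirror ih

/-- Key lemma: in a finite graph of minimum degree at least `3`, every dart
reaches its own reverse in the dart digraph. -/
lemma reach_symm {V : Type*} [Fintype V] (Λ : SimpleGraph V)
    [DecidableRel Λ.Adj] (hdeg : ∀ v : V, 3 ≤ Λ.degree v) (e : Λ.Dart) :
    Relation.ReflTransGen (IsTwoDart Λ) e e.symm := by
  classical
  by_contra hrev
  set R : Λ.Dart → Λ.Dart → Prop := Relation.ReflTransGen (IsTwoDart Λ) with hR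
  -- the set of darts reachable from `e`
  set B : Finset Λ.Dart := Finset.univ.filter (fun d => R e d) with hB
  have memB : ∀ d : Λ.Dart, d ∈ B ↔ R e d := by
    intro d; simp [hB]
  have heB : e ∈ B := (memB e).2 Relation.ReflTransGen.refl
  -- B is closed under successors
  have hsucc : ∀ d ∈ B, ∀ d' : Λ.Dart, IsTwoDart Λ d d' → d' ∈ B := by
    intro d hd d' hdd'
    exact (memB d').2 (Relation.ReflTransGen.tail ((memB d).1 hd) hdd')
  -- B contains no dart together with its reverse
  have hnorev : ∀ d ∈ B, d.symm ∉ B := by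
    intro d hd hds
    have h1 : R e d := (memB d).1 hd
    have h2 : R e d.symm := (memB d.symm).1 hds
    have h3 : R d e.symm := by
      have := mirrorR h2
      rwa [SimpleGraph.Dart.symm_symm] at this
    exact hrev (h1.trans h3)
  -- convenient step constructor
  have hstep : ∀ d ∈ B, ∀ (s : V) (hs : Λ.Adj d.toProd.2 s), d.toProd.1 ≠ s →
      (⟨(d.toProd.2, s), hs⟩ : Λ.Dart) ∈ B := by
    intro d hd s hs hne
    exact hsucc d hd _ ⟨rfl, hne⟩
  -- the head map is injective on B
  have hheadinj : Set.InjOn (fun d : Λ.Dart => d.toProd.2) (B : Set Λ.Dart) := by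
    intro d1 hd1 d2 hd2 hh
    simp only [Finset.mem_coe] at hd1 hd2
    by_contra hne
    have hh' : d1.toProd.2 = d2.toProd.2 := hh
    have htails : d1.toProd.1 ≠ d2.toProd.1 := by
      intro ht
      exact hne (SimpleGraph.Dart.ext _ _ (Prod.ext_iff.2 ⟨ht, hh'⟩))
    -- the dart (head d2, tail d1) is a successor of d2, and equals d1.symm
    have hadj : Λ.Adj d2.toProd.2 d1.toProd.1 := by
      rw [← hh']; exact d1.adj.symm
    have hmem : (⟨(d2.toProd.2, d1.toProd.1), hadj⟩ : Λ.Dart) ∈ B :=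
      hstep d2 hd2 _ hadj (fun hc => htails hc.symm)
    have hsymm : (⟨(d2.toProd.2, d1.toProd.1), hadj⟩ : Λ.Dart) = d1.symm := by
      apply SimpleGraph.Dart.ext
      rw [SimpleGraph.Dart.symm_toProd]
      show (d2.toProd.2, d1.toProd.1) = (d1.toProd.2, d1.toProd.1)
      rw [hh']
    rw [hsymm] at hmem
    exact hnorev d1 hd1 hmem
  -- heads of darts in B
  set H : Finset V := B.image (fun d : Λ.Dart => d.toProd.2) with hH
  have hcardH : H.card = B.card := Finset.card_image_of_injOn hheadinj
  -- every head vertex carries at least two darts of B as their tail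
  have hfiber : ∀ h ∈ H, 2 ≤ (B.filter (fun d : Λ.Dart => d.toProd.1 = h)).card := by
    intro h hh
    obtain ⟨d, hd, hdh⟩ := Finset.mem_image.1 hh
    -- two neighbors of h avoiding the tail of d
    have hcard : 1 < (Λ.neighborFinset h \ {d.toProd.1}).card := by
      have h1 : (Λ.neighborFinset h).card ≤
          (Λ.neighborFinset h \ {d.toProd.1}).card + ({d.toProd.1} : Finset V).card :=
        Finset.card_le_card_sdiff_add_card
      have h2 : 3 ≤ (Λ.neighborFinset h).card := by
        rw [SimpleGraph.card_neighborFinset_eq_degree]; exact hdeg h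
      simp only [Finset.card_singleton] at h1
      omega
    obtain ⟨s1, hs1, s2, hs2, hs12⟩ := Finset.one_lt_card.1 hcard
    simp only [Finset.mem_sdiff, SimpleGraph.mem_neighborFinset, Finset.mem_singleton] at hs1 hs2
    have hd1 : (⟨(h, s1), hs1.1⟩ : Λ.Dart) ∈ B := by
      have := hstep d hd s1 (by rw [hdh]; exact hs1.1) (fun hc => hs1.2 hc.symm)
      convert this using 2 <;> rw [hdh]
    have hd2 : (⟨(h, s2), hs2.1⟩ : Λ.Dart) ∈ B := by
      have := hstep d hd s2 (by rw [hdh]; exact hs2.1) (fun hc => hs2.2 hc.symm)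
      convert this using 2 <;> rw [hdh]
    apply Finset.one_lt_card.2
    refine ⟨⟨(h, s1), hs1.1⟩, ?_, ⟨(h, s2), hs2.1⟩, ?_, ?_⟩
    · exact Finset.mem_filter.2 ⟨hd1, rfl⟩
    · exact Finset.mem_filter.2 ⟨hd2, rfl⟩
    · intro hc
      apply hs12
      have := congrArg (fun d : Λ.Dart => d.toProd.2) hc
      simpa using this
  -- counting contradiction
  have hsum : (B.filter (fun d : Λ.Dart => d.toProd.1 ∈ H)).card =
      ∑ h ∈ H, ((B.filter (fun d : Λ.Dart => d.toProd.1 ∈ H)).filter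
        (fun d : Λ.Dart => d.toProd.1 = h)).card := by
    apply Finset.card_eq_sum_card_fiberwise
    intro d hd
    exact (Finset.mem_filter.1 hd).2
  have hsum2 : ∀ h ∈ H, ((B.filter (fun d : Λ.Dart => d.toProd.1 ∈ H)).filter
      (fun d : Λ.Dart => d.toProd.1 = h)).card =
      (B.filter (fun d : Λ.Dart => d.toProd.1 = h)).card := by
    intro h hh
    congr 1
    rw [Finset.filter_filter]
    apply Finset.filter_congr
    intro d _
    constructor
    · rintro ⟨_, h2⟩; exact h2
    · intro h2; exact ⟨h2 ▸ hh, h2⟩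
  have hge : 2 * H.card ≤ (B.filter (fun d : Λ.Dart => d.toProd.1 ∈ H)).card := by
    rw [hsum]
    calc 2 * H.card = ∑ _h ∈ H, 2 := by rw [Finset.sum_const, smul_eq_mul, mul_comm]
    _ ≤ _ := Finset.sum_le_sum (fun h hh => (hsum2 h hh) ▸ hfiber h hh)
  have hle : (B.filter (fun d : Λ.Dart => d.toProd.1 ∈ H)).card ≤ B.card :=
    Finset.card_le_card (Finset.filter_subset _ _)
  have hpos : 0 < B.card := Finset.card_pos.2 ⟨e, heB⟩
  omega

/-- Lifting of walks: from a dart whose head is `a`, one can reach some dart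
whose head is `b`, along any walk from `a` to `b`. -/
lemma go_along {V : Type*} [Fintype V] (Λ : SimpleGraph V)
    [DecidableRel Λ.Adj] (hdeg : ∀ v : V, 3 ≤ Λ.degree v) :
    ∀ {a b : V} (_ : Λ.Walk a b) (x : Λ.Dart), x.toProd.2 = a →
    ∃ z : Λ.Dart, Relation.ReflTransGen (IsTwoDart Λ) x z ∧ z.toProd.2 = b := by
  intro a b p
  induction p with
  | nil => exact fun x hx => ⟨x, Relation.ReflTransGen.refl, hx⟩
  | @cons a c b h p ih =>
    intro x hx
    set y : Λ.Dart := ⟨(a, c), h⟩ with hy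
    have hxy : Relation.ReflTransGen (IsTwoDart Λ) x y := by
      by_cases hc : x.toProd.1 = c
      · have hxe : y = x.symm := by
          apply SimpleGraph.Dart.ext
          rw [SimpleGraph.Dart.symm_toProd]
          show (a, c) = (x.toProd.2, x.toProd.1)
          rw [hx, hc]
        rw [hxe]
        exact reach_symm Λ hdeg x
      · exact Relation.ReflTransGen.single ⟨hx, hc⟩
    obtain ⟨z, hz, hz2⟩ := ih y rfl
    exact ⟨z, hxy.trans hz, hz2⟩

/-- If `Λ` is a connected finite simple graph of minimum degree at least 3, then
the dart digraph `D(Λ)` is strongly connected: for any darts `x`, `y` of `Λ`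
there is a directed walk in `D(Λ)` from `x` to `y`. -/
theorem dartDigraph_strongly_connected {V : Type*} [Fintype V] (Λ : SimpleGraph V)
    [DecidableRel Λ.Adj] (hconn : Λ.Connected) (hdeg : ∀ v : V, 3 ≤ Λ.degree v) :
    ∀ x y : Λ.Dart, Relation.ReflTransGen (IsTwoDart Λ) x y := by
  intro x y
  obtain ⟨p⟩ := hconn.preconnected x.toProd.2 y.toProd.1
  obtain ⟨z, hz, hz2⟩ := go_along Λ hdeg p x rfl
  by_cases hq : z.toProd.1 = y.toProd.2
  · have hze : z = y.symm := by
      apply SimpleGraph.Dart.ext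
      rw [SimpleGraph.Dart.symm_toProd]
      show z.toProd = (y.toProd.2, y.toProd.1)
      exact Prod.ext_iff.2 ⟨hq, hz2⟩
    rw [hze] at hz
    have := reach_symm Λ hdeg y.symm
    rw [SimpleGraph.Dart.symm_symm] at this
    exact hz.trans this
  · exact Relation.ReflTransGen.tail hz ⟨hz2, hq⟩
end

section
/- If Λ is a connected finite simple graph in which every vertex has degree at least 3, then the squared dart digraph A²D(Λ) is strongly connected: for any two ordered pairs of darts (x,y) and (w,z) of Λ there is a directed walk in A²D(Λ) from (x,y) to (w,z). -/
/-- The dart relation of the squared dart digraph `A²D(Λ)`: there is a dart from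
`(x, y)` to `(z, w)` iff `y = z` and `(x, w)` is a 2-dart of `Λ`. -/
def SqDartRel {V : Type*} (Λ : SimpleGraph V) (p q : Λ.Dart × Λ.Dart) : Prop :=
  p.2 = q.1 ∧ IsTwoDart Λ p.1 q.2

open SimpleGraph

section NBT
variable {V : Type*} {Λ : SimpleGraph V}

/-- Non-backtracking walks of darts, length-indexed, built by appending at the tail. -/
inductive NBT (Λ : SimpleGraph V) : ℕ → Λ.Dart → Λ.Dart → Prop
  | refl (a : Λ.Dart) : NBT Λ 0 a a
  | tail {n : ℕ} {a b c : Λ.Dart} : NBT Λ n a b → IsTwoDart Λ b c → NBT Λ (n+1) a c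

theorem NBT.cast {n n' : ℕ} {a b : Λ.Dart} (h : NBT Λ n a b) (e : n = n') : NBT Λ n' a b :=
  e ▸ h

theorem NBT.single {a b : Λ.Dart} (h : IsTwoDart Λ a b) : NBT Λ 1 a b :=
  (NBT.refl a).tail h

theorem NBT.trans {m n : ℕ} {a b c : Λ.Dart} (h1 : NBT Λ m a b) (h2 : NBT Λ n b c) :
    NBT Λ (m + n) a c := by
  induction h2 with
  | refl => exact h1
  | tail h2 hstep ih => exact ((ih h1).tail hstep).cast (by omega)

theorem NBT.head {n : ℕ} {a b c : Λ.Dart} (h : IsTwoDart Λ a b) (h2 : NBT Λ n b c) :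
    NBT Λ (n+1) a c := ((NBT.single h).trans h2).cast (by omega)

theorem NBT.zero_eq {a b : Λ.Dart} (h : NBT Λ 0 a b) : a = b := by
  cases h; rfl

theorem NBT.succ_inv {n : ℕ} {a c : Λ.Dart} (h : NBT Λ (n+1) a c) :
    ∃ b, NBT Λ n a b ∧ IsTwoDart Λ b c := by
  cases h with
  | tail h hstep => exact ⟨_, h, hstep⟩

theorem NBT.iterate {P : ℕ} {e : Λ.Dart} (h : NBT Λ P e e) (c : ℕ) : NBT Λ (c * P) e e := by
  induction c with
  | zero => exact (NBT.refl e).cast (by omega)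
  | succ c ih => exact (ih.trans h).cast (by ring)

end NBT

section Main
variable {V : Type*} [Fintype V] (Λ : SimpleGraph V) [DecidableRel Λ.Adj]

theorem exists_maximal_path (hdeg : ∀ v : V, 3 ≤ Λ.degree v)
    (a : Λ.Dart) :
    ∃ (k : ℕ) (f : ℕ → V), 1 ≤ k ∧ f 0 = a.toProd.1 ∧ f 1 = a.toProd.2 ∧
      (∀ m, m < k → Λ.Adj (f m) (f (m+1))) ∧
      (∀ i j, i ≤ k → j ≤ k → f i = f j → i = j) ∧
      (∀ t, Λ.Adj (f k) t → ∃ i, i ≤ k ∧ f i = t) := by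
  classical
  have aux : ∀ (c k : ℕ) (f : ℕ → V), Fintype.card V - k = c → 1 ≤ k →
      f 0 = a.toProd.1 → f 1 = a.toProd.2 →
      (∀ m, m < k → Λ.Adj (f m) (f (m+1))) →
      (∀ i j, i ≤ k → j ≤ k → f i = f j → i = j) →
      ∃ (k' : ℕ) (f' : ℕ → V), 1 ≤ k' ∧ f' 0 = a.toProd.1 ∧ f' 1 = a.toProd.2 ∧
        (∀ m, m < k' → Λ.Adj (f' m) (f' (m+1))) ∧
        (∀ i j, i ≤ k' → j ≤ k' → f' i = f' j → i = j) ∧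
        (∀ t, Λ.Adj (f' k') t → ∃ i, i ≤ k' ∧ f' i = t) := by
    intro c
    induction c using Nat.strong_induction_on with
    | _ c ih =>
      intro k f hc hk hf0 hf1 hadj hinj
      by_cases hmax : ∀ t, Λ.Adj (f k) t → ∃ i, i ≤ k ∧ f i = t
      · exact ⟨k, f, hk, hf0, hf1, hadj, hinj, hmax⟩
      · push_neg at hmax
        obtain ⟨t, hat, hnew⟩ := hmax
        -- k + 1 ≤ card V
        have hcard : k + 1 ≤ Fintype.card V := by
          have h1 : ((Finset.range (k+1)).image f).card = (Finset.range (k+1)).card := by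
            apply Finset.card_image_of_injOn
            intro i hi j hj hij
            exact hinj i j (by simpa using Nat.lt_succ_iff.mp (Finset.mem_range.mp hi))
              (Nat.lt_succ_iff.mp (Finset.mem_range.mp hj)) hij
          calc k + 1 = (Finset.range (k+1)).card := (Finset.card_range _).symm
            _ = ((Finset.range (k+1)).image f).card := h1.symm
            _ ≤ Fintype.card V := Finset.card_le_univ _
        set f' : ℕ → V := Function.update f (k+1) t with hf'
        have hfeq : ∀ m, m ≤ k → f' m = f m := by
          intro m hm; apply Function.update_of_ne (by omega)
        have hftop : f' (k+1) = t := Function.update_self _ _ _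
        refine ih (Fintype.card V - (k+1)) (by omega) (k+1) f' (rfl) (by omega) ?_ ?_ ?_ ?_
        · rw [hfeq 0 (by omega)]; exact hf0
        · rw [hfeq 1 hk]; exact hf1
        · intro m hm
          rcases Nat.lt_or_ge m k with h | h
          · rw [hfeq m (by omega), hfeq (m+1) (by omega)]; exact hadj m h
          · have : m = k := by omega
            subst this
            rw [hfeq m le_rfl, hftop]; exact hat
        · intro i j hi hj hij
          rcases Nat.lt_or_ge i (k+1) with h1 | h1 <;> rcases Nat.lt_or_ge j (k+1) with h2 | h2
          · rw [hfeq i (by omega), hfeq j (by omega)] at hij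
            exact hinj i j (by omega) (by omega) hij
          · have : j = k + 1 := by omega
            subst this
            rw [hfeq i (by omega), hftop] at hij
            exact absurd hij (hnew i (by omega))
          · have : i = k + 1 := by omega
            subst this
            rw [hfeq j (by omega), hftop] at hij
            exact absurd hij.symm (hnew j (by omega))
          · omega
  · -- initial path of length 1 along the dart a
    have hne : a.toProd.1 ≠ a.toProd.2 := Λ.ne_of_adj a.adj
    refine aux (Fintype.card V - 1) 1 (fun m => if m = 0 then a.toProd.1 else a.toProd.2)
      rfl le_rfl (by simp) (by simp) ?_ ?_
    · intro m hm
      have : m = 0 := by omega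
      subst this
      simpa using a.adj
    · intro i j hi hj hij
      have hi' : i = 0 ∨ i = 1 := by omega
      have hj' : j = 0 ∨ j = 1 := by omega
      rcases hi' with rfl | rfl <;> rcases hj' with rfl | rfl <;>
        first
          | rfl
          | (exfalso; apply hne; simpa using hij)
          | (exfalso; apply hne; simpa using hij.symm)


theorem exists_chord_data (hdeg : ∀ v : V, 3 ≤ Λ.degree v)
    (a : Λ.Dart) :
    ∃ (k : ℕ) (f : ℕ → V) (i j : ℕ),
      f 0 = a.toProd.1 ∧ f 1 = a.toProd.2 ∧
      (∀ m, m < k → Λ.Adj (f m) (f (m+1))) ∧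
      (∀ i' j', i' ≤ k → j' ≤ k → f i' = f j' → i' = j') ∧
      i < j ∧ j + 2 ≤ k ∧ Λ.Adj (f k) (f i) ∧ Λ.Adj (f k) (f j) := by
  classical
  obtain ⟨k, f, hk, hf0, hf1, hadj, hinj, hmax⟩ := exists_maximal_path Λ hdeg a
  set T : Finset ℕ := (Finset.range k).filter (fun m => Λ.Adj (f k) (f m)) with hT
  have hTcard : 3 ≤ T.card := by
    have hsub : Λ.neighborFinset (f k) ⊆ T.image f := by
      intro t ht
      rw [SimpleGraph.mem_neighborFinset] at ht
      obtain ⟨i, hik, hfi⟩ := hmax t ht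
      have hne : t ≠ f k := (Λ.ne_of_adj ht).symm
      have hik' : i < k := by
        rcases Nat.lt_or_ge i k with h | h
        · exact h
        · exfalso; apply hne; rw [← hfi]; congr 1; omega
      refine Finset.mem_image.mpr ⟨i, ?_, hfi⟩
      rw [hT, Finset.mem_filter, Finset.mem_range]
      exact ⟨hik', by rwa [hfi]⟩
    calc 3 ≤ Λ.degree (f k) := hdeg _
      _ = (Λ.neighborFinset (f k)).card := rfl
      _ ≤ (T.image f).card := Finset.card_le_card hsub
      _ ≤ T.card := Finset.card_image_le
  have hT2 : 2 ≤ (T.erase (k-1)).card := by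
    by_cases hm : (k-1) ∈ T
    · rw [Finset.card_erase_of_mem hm]; omega
    · rw [Finset.erase_eq_of_notMem hm]; omega
  obtain ⟨x, hx, y, hy, hxy⟩ := (Finset.one_lt_card (s := T.erase (k-1))).mp (by omega)
  have hprop : ∀ m ∈ T.erase (k-1), m + 2 ≤ k ∧ Λ.Adj (f k) (f m) := by
    intro m hm
    have h1 := Finset.ne_of_mem_erase hm
    have h2 := Finset.mem_of_mem_erase hm
    rw [hT, Finset.mem_filter, Finset.mem_range] at h2
    exact ⟨by omega, h2.2⟩
  obtain ⟨hx2, hxadj⟩ := hprop x hx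
  obtain ⟨hy2, hyadj⟩ := hprop y hy
  rcases lt_or_gt_of_ne hxy with h | h
  · exact ⟨k, f, x, y, hf0, hf1, hadj, hinj, h, hy2, hxadj, hyadj⟩
  · exact ⟨k, f, y, x, hf0, hf1, hadj, hinj, h, hx2, hyadj, hxadj⟩


variable {Λ}

theorem chord_walks (a : Λ.Dart) (k : ℕ) (f : ℕ → V) (i j : ℕ)
    (hf0 : f 0 = a.toProd.1) (hf1 : f 1 = a.toProd.2)
    (hadj : ∀ m, m < k → Λ.Adj (f m) (f (m+1)))
    (hinj : ∀ i' j', i' ≤ k → j' ≤ k → f i' = f j' → i' = j')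
    (hij : i < j) (hjk : j + 2 ≤ k)
    (hki : Λ.Adj (f k) (f i)) (hkj : Λ.Adj (f k) (f j)) :
    (∃ n, NBT Λ n a a.symm) ∧ ∃ (e : Λ.Dart) (P : ℕ), NBT Λ P e e ∧ NBT Λ (P+2) e e := by
  classical
  let D : ℕ → Λ.Dart := fun m => if h : m + 1 ≤ k then ⟨(f m, f (m+1)), hadj m (by omega)⟩ else a
  let R : ℕ → Λ.Dart := fun m => if h : 1 ≤ m ∧ m ≤ k then
      ⟨(f m, f (m-1)), by
        have h2 := hadj (m-1) (by omega)
        have h3 : m - 1 + 1 = m := by omega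
        rw [h3] at h2
        exact h2.symm⟩ else a
  have hD : ∀ m, m + 1 ≤ k → (D m).toProd = (f m, f (m+1)) := by
    intro m h; simp only [D]; rw [dif_pos h]
  have hR : ∀ m, 1 ≤ m → m ≤ k → (R m).toProd = (f m, f (m-1)) := by
    intro m h1 h2; simp only [R]; rw [dif_pos ⟨h1, h2⟩]
  have hfne : ∀ p q, p ≤ k → q ≤ k → p ≠ q → f p ≠ f q := by
    intro p q hp hq hne he; exact hne (hinj p q hp hq he)
  have ascend : ∀ c s, s + c + 1 ≤ k → NBT Λ c (D s) (D (s + c)) := by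
    intro c
    induction c with
    | zero => intro s h; exact NBT.refl _
    | succ c ih =>
      intro s h
      refine (ih s (by omega)).tail ?_
      have e1 := hD (s+c) (by omega)
      have e2 : (D (s+(c+1))).toProd = (f (s+c+1), f (s+c+1+1)) := hD (s+c+1) (by omega)
      constructor
      · rw [e1, e2]
      · rw [e1, e2]
        show f (s+c) ≠ f (s+c+1+1)
        exact hfne _ _ (by omega) (by omega) (by omega)
  have descend : ∀ c t, 1 ≤ t → t + c ≤ k → NBT Λ c (R (t + c)) (R t) := by
    intro c
    induction c with
    | zero => intro t h1 h2; exact NBT.refl _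
    | succ c ih =>
      intro t h1 h2
      refine NBT.head ?_ (ih t h1 (by omega))
      have e1 : (R (t+(c+1))).toProd = (f (t+c+1), f (t+c+1-1)) := hR (t+c+1) (by omega) (by omega)
      have e2 := hR (t+c) (by omega) (by omega)
      constructor
      · rw [e1, e2]
        show f (t+c+1-1) = f (t+c)
        congr 1
      · rw [e1, e2]
        show f (t+c+1) ≠ f (t+c-1)
        exact hfne _ _ (by omega) (by omega) (by omega)
  have haD : D 0 = a := by
    apply Dart.ext
    rw [hD 0 (by omega), hf0, hf1]
  have haR : R 1 = a.symm := by
    apply Dart.ext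
    rw [hR 1 le_rfl (by omega), Dart.symm_toProd, hf1, hf0]
    rfl
  have W1 : NBT Λ (k-1) (D 0) (D (k-1)) := by
    have h := ascend (k-1) 0 (by omega)
    rwa [show 0 + (k-1) = k-1 by omega] at h
  let Cj : Λ.Dart := ⟨(f k, f j), hkj⟩
  let Ci : Λ.Dart := ⟨(f k, f i), hki⟩
  let Ci' : Λ.Dart := ⟨(f i, f k), hki.symm⟩
  have s1 : IsTwoDart Λ (D (k-1)) Cj := by
    have e1 := hD (k-1) (by omega)
    constructor
    · rw [e1]
      show f (k-1+1) = f k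
      congr 1
      omega
    · rw [e1]
      show f (k-1) ≠ f j
      exact hfne _ _ (by omega) (by omega) (by omega)
  have s2 : IsTwoDart Λ Cj (R j) := by
    have e2 := hR j (by omega) (by omega)
    constructor
    · rw [e2]
    · rw [e2]
      show f k ≠ f (j-1)
      exact hfne _ _ le_rfl (by omega) (by omega)
  have W2 : NBT Λ (j-1) (R j) (R 1) := by
    have h := descend (j-1) 1 le_rfl (by omega)
    rwa [show 1 + (j-1) = j by omega] at h
  have hrev : ∃ n, NBT Λ n a a.symm := by
    refine ⟨(k-1) + 1 + 1 + (j-1), ?_⟩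
    rw [← haR, ← haD]
    exact ((W1.tail s1).tail s2).trans W2
  have A1 : NBT Λ (k-1-j) (D j) (D (k-1)) := by
    have h := ascend (k-1-j) j (by omega)
    rwa [show j + (k-1-j) = k-1 by omega] at h
  have s3 : IsTwoDart Λ (D (k-1)) Ci := by
    have e1 := hD (k-1) (by omega)
    constructor
    · rw [e1]
      show f (k-1+1) = f k
      congr 1
      omega
    · rw [e1]
      show f (k-1) ≠ f i
      exact hfne _ _ (by omega) (by omega) (by omega)
  have s4 : IsTwoDart Λ Ci (D i) := by
    have e1 := hD i (by omega)
    constructor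
    · rw [e1]
    · rw [e1]
      show f k ≠ f (i+1)
      exact hfne _ _ le_rfl (by omega) (by omega)
  have A2 : NBT Λ (j-1-i) (D i) (D (j-1)) := by
    have h := ascend (j-1-i) i (by omega)
    rwa [show i + (j-1-i) = j-1 by omega] at h
  have s5 : IsTwoDart Λ (D (j-1)) (D j) := by
    have e1 := hD (j-1) (by omega)
    have e2 := hD j (by omega)
    constructor
    · rw [e1, e2]
      show f (j-1+1) = f j
      congr 1
      omega
    · rw [e1, e2]
      show f (j-1) ≠ f (j+1)
      exact hfne _ _ (by omega) (by omega) (by omega)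
  have hC1 : NBT Λ ((k-1-j) + 1 + 1 + (j-1-i) + 1) (D j) (D j) :=
    (((A1.tail s3).tail s4).trans A2).tail s5
  have Dsc : NBT Λ (j-1-i) (R j) (R (i+1)) := by
    have h := descend (j-1-i) (i+1) (by omega) (by omega)
    rwa [show (i+1) + (j-1-i) = j by omega] at h
  have t3 : IsTwoDart Λ (R (i+1)) Ci' := by
    have e := hR (i+1) (by omega) (by omega)
    constructor
    · rw [e]
      show f (i+1-1) = f i
      congr 1
    · rw [e]
      show f (i+1) ≠ f k
      exact hfne _ _ (by omega) le_rfl (by omega)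
  have t4 : IsTwoDart Λ Ci' Cj := by
    constructor
    · rfl
    · show f i ≠ f j
      exact hfne _ _ (by omega) (by omega) (by omega)
  have t5 : IsTwoDart Λ Cj (D j) := by
    have e := hD j (by omega)
    constructor
    · rw [e]
    · rw [e]
      show f k ≠ f (j+1)
      exact hfne _ _ le_rfl (by omega) (by omega)
  have hC2 : NBT Λ ((k-1-j) + 1 + 1 + (j-1-i) + 1 + 1 + 1) (D j) (D j) :=
    (((((A1.tail s1).tail s2).trans Dsc).tail t3).tail t4).tail t5
  exact ⟨hrev, D j, (k-1-j) + 1 + 1 + (j-1-i) + 1, hC1, hC2.cast (by omega)⟩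

theorem reversal_and_loops (hdeg : ∀ v : V, 3 ≤ Λ.degree v) (a : Λ.Dart) :
    (∃ n, NBT Λ n a a.symm) ∧ ∃ (e : Λ.Dart) (P : ℕ), NBT Λ P e e ∧ NBT Λ (P+2) e e := by
  obtain ⟨k, f, i, j, hf0, hf1, hadj, hinj, hij, hjk, hki, hkj⟩ := exists_chord_data Λ hdeg a
  exact chord_walks a k f i j hf0 hf1 hadj hinj hij hjk hki hkj

theorem nbt_reach (hconn : Λ.Connected) (hdeg : ∀ v : V, 3 ≤ Λ.degree v)
    (a b : Λ.Dart) : ∃ n, NBT Λ n a b := by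
  have hrev : ∀ x : Λ.Dart, ∃ n, NBT Λ n x x.symm := fun x => (reversal_and_loops hdeg x).1
  have step_claim : ∀ (x c : Λ.Dart), c.toProd.1 = x.toProd.2 → ∃ n, NBT Λ n x c := by
    intro x c h
    by_cases h2 : c.toProd.2 = x.toProd.1
    · have hc : c = x.symm := by
        apply Dart.ext
        rw [Dart.symm_toProd]
        exact Prod.ext h h2
      rw [hc]; exact hrev x
    · exact ⟨1, NBT.single ⟨h.symm, fun he => h2 he.symm⟩⟩
  have main : ∀ (u w : V) (wk : Λ.Walk u w) (x : Λ.Dart), x.toProd.2 = u →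
      w = b.toProd.1 → ∃ n, NBT Λ n x b := by
    intro u w wk
    induction wk with
    | nil =>
      intro x hx hw
      refine step_claim x b ?_
      rw [← hw]
      exact hx.symm
    | @cons u v _ hadj p ih =>
      intro x hx hw
      obtain ⟨n1, h1⟩ := step_claim x ⟨(u, v), hadj⟩ hx.symm
      obtain ⟨n2, h2⟩ := ih ⟨(u, v), hadj⟩ rfl hw
      exact ⟨n1 + n2, h1.trans h2⟩
  obtain ⟨wk⟩ := hconn.preconnected a.toProd.2 b.toProd.1
  exact main _ _ wk a rfl rfl

theorem exists_loops (hdeg : ∀ v : V, 3 ≤ Λ.degree v) (a : Λ.Dart) :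
    ∃ (e : Λ.Dart) (P : ℕ), NBT Λ P e e ∧ NBT Λ (P + 2) e e :=
  (reversal_and_loops hdeg a).2

/-- Two parallel nbt walks of the same length give a walk in the squared dart digraph. -/
theorem pair_walk {m : ℕ} {x y w z : Λ.Dart} (h1 : NBT Λ m x w) (h2 : NBT Λ m y z) :
    Relation.ReflTransGen (SqDartRel Λ) (x, y) (w, z) := by
  induction m generalizing w z with
  | zero => rw [h1.zero_eq, h2.zero_eq]
  | succ m ih =>
    obtain ⟨w', hw', hsw⟩ := h1.succ_inv
    obtain ⟨z', hz', hsz⟩ := h2.succ_inv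
    have s1 : SqDartRel Λ (w', z') (z', w) := ⟨rfl, hsw⟩
    have s2 : SqDartRel Λ (z', w) (w, z) := ⟨rfl, hsz⟩
    exact ((ih hw' hz').tail s1).tail s2

theorem pair_walk_odd {m : ℕ} {x y w z : Λ.Dart} (h1 : NBT Λ (m+1) x z) (h2 : NBT Λ m y w) :
    Relation.ReflTransGen (SqDartRel Λ) (x, y) (w, z) := by
  obtain ⟨u, hu, hsu⟩ := h1.succ_inv
  have s : SqDartRel Λ (u, w) (w, z) := ⟨rfl, hsu⟩
  exact (pair_walk hu h2).tail s

end Main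

/-- If `Λ` is a connected finite simple graph of minimum degree at least 3, then
the squared dart digraph `A²D(Λ)` is strongly connected: for any two ordered
pairs of darts there is a directed walk in `A²D(Λ)` from one to the other. -/
theorem sqDartDigraph_strongly_connected {V : Type*} [Fintype V] (Λ : SimpleGraph V)
    [DecidableRel Λ.Adj] (hconn : Λ.Connected) (hdeg : ∀ v : V, 3 ≤ Λ.degree v) :
    ∀ p q : Λ.Dart × Λ.Dart, Relation.ReflTransGen (SqDartRel Λ) p q := by
  intro ⟨x, y⟩ ⟨w, z⟩
  obtain ⟨e, P, hP, hP2⟩ := exists_loops hdeg x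
  obtain ⟨k1, h1⟩ := nbt_reach hconn hdeg x e
  obtain ⟨k2, h2⟩ := nbt_reach hconn hdeg e w
  obtain ⟨k3, h3⟩ := nbt_reach hconn hdeg y e
  obtain ⟨k4, h4⟩ := nbt_reach hconn hdeg e z
  rcases Nat.even_or_odd ((k1 + k2) + (k3 + k4)) with hpar | hpar
  · rcases le_total (k1 + k2) (k3 + k4) with hle | hle
    · obtain ⟨δ, hδ⟩ : ∃ δ, k3 + k4 = k1 + k2 + 2 * δ := by
        rcases hpar with ⟨c, hc⟩; exact ⟨(k3 + k4 - (k1 + k2))/2, by omega⟩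
      obtain ⟨L, L', hL, hL', hrel⟩ : ∃ L L', NBT Λ L e e ∧ NBT Λ L' e e ∧ L' = L + 2 * δ :=
        ⟨δ * P, δ * (P + 2), hP.iterate δ, hP2.iterate δ, by ring⟩
      exact pair_walk (m := k1 + (L' + k2))
        ((h1.trans (hL'.trans h2)).cast (by omega))
        ((h3.trans (hL.trans h4)).cast (by omega))
    · obtain ⟨δ, hδ⟩ : ∃ δ, k1 + k2 = k3 + k4 + 2 * δ := by
        rcases hpar with ⟨c, hc⟩; exact ⟨(k1 + k2 - (k3 + k4))/2, by omega⟩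
      obtain ⟨L, L', hL, hL', hrel⟩ : ∃ L L', NBT Λ L e e ∧ NBT Λ L' e e ∧ L' = L + 2 * δ :=
        ⟨δ * P, δ * (P + 2), hP.iterate δ, hP2.iterate δ, by ring⟩
      exact pair_walk (m := k1 + (L + k2))
        ((h1.trans (hL.trans h2)).cast (by omega))
        ((h3.trans (hL'.trans h4)).cast (by omega))
  · rcases le_or_gt (k3 + k2 + 1) (k1 + k4) with hle | hle
    · obtain ⟨δ, hδ⟩ : ∃ δ, k1 + k4 = (k3 + k2) + 1 + 2 * δ := by
        rcases hpar with ⟨c, hc⟩; exact ⟨(k1 + k4 - (k3 + k2) - 1)/2, by omega⟩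
      obtain ⟨L, L', hL, hL', hrel⟩ : ∃ L L', NBT Λ L e e ∧ NBT Λ L' e e ∧ L' = L + 2 * δ :=
        ⟨δ * P, δ * (P + 2), hP.iterate δ, hP2.iterate δ, by ring⟩
      exact pair_walk_odd (m := k3 + (L' + k2))
        ((h1.trans (hL.trans h4)).cast (by omega))
        ((h3.trans (hL'.trans h2)).cast (by omega))
    · obtain ⟨δ, hδ⟩ : ∃ δ, k3 + k2 = (k1 + k4) + 1 + 2 * δ := by
        rcases hpar with ⟨c, hc⟩; exact ⟨(k3 + k2 - (k1 + k4) - 1)/2, by omega⟩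
      obtain ⟨L, L', hL, hL', hrel⟩ : ∃ L L', NBT Λ L e e ∧ NBT Λ L' e e ∧ L' = L + 2 * δ + 2 :=
        ⟨(δ+1) * P, (δ+1) * (P + 2), hP.iterate (δ+1), hP2.iterate (δ+1), by ring⟩
      exact pair_walk_odd (m := k3 + (L + k2))
        ((h1.trans (hL'.trans h4)).cast (by omega))
        ((h3.trans (hL.trans h2)).cast (by omega))
end

section
/- Let Λ be a connected finite simple graph and let e and f be two edges of Λ. Then there exist darts x and y of Λ whose underlying edges are e and f respectively, such that there is a directed walk from x to y in the dart digraph D(Λ). -/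
lemma lemA {V : Type*} {Λ : SimpleGraph V} {b c : V} (p : Λ.Walk b c) :
    p.IsPath → ∀ {a d : V} (hab : Λ.Adj a b) (hcd : Λ.Adj c d),
      a ∉ p.support →
      ∃ y : Λ.Dart, y.edge = s(c, d) ∧
        Relation.ReflTransGen (IsTwoDart Λ) (SimpleGraph.Dart.mk (a, b) hab) y := by
  induction p with
  | @nil u =>
    intro _ a d hab hcd _
    by_cases h : a = d
    · subst h
      exact ⟨SimpleGraph.Dart.mk (a, u) hab, Sym2.eq_swap, Relation.ReflTransGen.refl⟩
    · exact ⟨SimpleGraph.Dart.mk (u, d) hcd, rfl, Relation.ReflTransGen.single ⟨rfl, h⟩⟩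
  | @cons b w c h q ih =>
    intro hp a d hab hcd ha
    rw [SimpleGraph.Walk.cons_isPath_iff] at hp
    rw [SimpleGraph.Walk.support_cons, List.mem_cons] at ha
    push_neg at ha
    obtain ⟨y, hy, hchain⟩ := ih hp.1 h hcd hp.2
    refine ⟨y, hy, Relation.ReflTransGen.head ?_ hchain⟩
    refine ⟨rfl, fun haw => ha.2 ?_⟩
    rw [show a = w from haw]
    exact q.start_mem_support

lemma lemB {V : Type*} {Λ : SimpleGraph V} {b c : V} (p : Λ.Walk b c) (hp : p.IsPath)
    {a d : V} (hab : Λ.Adj a b) (hcd : Λ.Adj c d) :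
    ∃ x y : Λ.Dart, x.edge = s(a, b) ∧ y.edge = s(c, d) ∧
      Relation.ReflTransGen (IsTwoDart Λ) x y := by
  cases p with
  | nil =>
    by_cases h : a = d
    · subst h
      exact ⟨SimpleGraph.Dart.mk (a, b) hab, SimpleGraph.Dart.mk (a, b) hab, rfl,
        Sym2.eq_swap, Relation.ReflTransGen.refl⟩
    · exact ⟨SimpleGraph.Dart.mk (a, b) hab, SimpleGraph.Dart.mk (b, d) hcd, rfl, rfl,
        Relation.ReflTransGen.single ⟨rfl, h⟩⟩
  | @cons b w c h q =>
    rw [SimpleGraph.Walk.cons_isPath_iff] at hp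
    obtain ⟨y, hy, hchain⟩ := lemA q hp.1 h hcd hp.2
    by_cases hw : w = a
    · subst hw
      exact ⟨SimpleGraph.Dart.mk (b, w) h, y, Sym2.eq_swap, hy, hchain⟩
    · exact ⟨SimpleGraph.Dart.mk (a, b) hab, y, rfl, hy,
        hchain.head ⟨rfl, fun haw => hw haw.symm⟩⟩

/-- If `Λ` is a connected finite simple graph and `e`, `f` are edges of `Λ`,
then there are darts `x` and `y` underlying `e` and `f` respectively such that
there is a directed walk in the dart digraph `D(Λ)` from `x` to `y`. -/
theorem directedWalk_between_edges {V : Type*} [Fintype V] (Λ : SimpleGraph V)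
    (hconn : Λ.Connected) (e f : Sym2 V) (he : e ∈ Λ.edgeSet)
    (hf : f ∈ Λ.edgeSet) :
    ∃ x y : Λ.Dart, x.edge = e ∧ y.edge = f ∧
      Relation.ReflTransGen (IsTwoDart Λ) x y := by
  induction e using Sym2.ind with
  | _ a b =>
  induction f using Sym2.ind with
  | _ c d =>
  rw [SimpleGraph.mem_edgeSet] at he hf
  classical
  obtain ⟨w⟩ := hconn.preconnected b c
  exact lemB w.toPath w.toPath.2 he hf
end

section
/- Let Λ be a finite simple graph and let x, y, w, z be darts of Λ. If there exist directed walks in the dart digraph D(Λ) from x to w and from y to z having the same length k, then there exists a directed walk of length 2k in the squared dart digraph A²D(Λ) from the vertex (x,y) to the vertex (w,z). -/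
/-- If there are directed walks in `D(Λ)` from `x` to `w` and from `y` to `z`
of the same length `k`, then there is a directed walk of length `2k` in
`A²D(Λ)` from `(x, y)` to `(w, z)`. -/
theorem sqDartDigraph_walk_of_equal_length_walks {V : Type*} [Fintype V]
    (Λ : SimpleGraph V) (x y w z : Λ.Dart) (k : ℕ)
    (h₁ : ∃ a : ℕ → Λ.Dart, a 0 = x ∧ a k = w ∧
      ∀ i < k, IsTwoDart Λ (a i) (a (i + 1)))
    (h₂ : ∃ b : ℕ → Λ.Dart, b 0 = y ∧ b k = z ∧
      ∀ i < k, IsTwoDart Λ (b i) (b (i + 1))) :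
    ∃ c : ℕ → Λ.Dart × Λ.Dart, c 0 = (x, y) ∧ c (2 * k) = (w, z) ∧
      ∀ i < 2 * k, SqDartRel Λ (c i) (c (i + 1)) := by
  obtain ⟨a, ha0, hak, ha⟩ := h₁
  obtain ⟨b, hb0, hbk, hb⟩ := h₂
  refine ⟨fun n => if n % 2 = 0 then (a (n/2), b (n/2)) else (b (n/2), a (n/2 + 1)), ?_, ?_, ?_⟩
  · simp [ha0, hb0]
  · simp [Nat.mul_div_cancel_left, hak, hbk, Nat.mul_mod_right]
  · intro i hi
    rcases Nat.even_or_odd i with ⟨j, hj⟩ | ⟨j, hj⟩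
    · subst hj
      have hjk : j < k := by omega
      have h2 : (j+j) % 2 = 0 := by omega
      have h3 : (j+j)/2 = j := by omega
      have h4 : (j+j+1) % 2 = 1 := by omega
      have h5 : (j+j+1)/2 = j := by omega
      simp only [h2, h3, h4, h5, if_pos rfl, if_neg (by omega : ¬(1:ℕ) = 0)]
      exact ⟨rfl, ha j hjk⟩
    · subst hj
      have hjk : j < k := by omega
      have h2 : (2*j+1) % 2 = 1 := by omega
      have h3 : (2*j+1)/2 = j := by omega
      have h4 : (2*j+1+1) % 2 = 0 := by omega
      have h5 : (2*j+1+1)/2 = j+1 := by omega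
      simp only [h2, h3, h4, h5, if_pos rfl, if_neg (by omega : ¬(1:ℕ) = 0)]
      exact ⟨rfl, hb j hjk⟩
end

section
/- Let Λ be a connected, non-bipartite finite simple graph in which every vertex has degree at least 3. Then for any darts x, w, y, z of Λ there exist directed walks in the dart digraph D(Λ) from x to w and from y to z that have equal length. -/
open Relation

namespace Relation

variable {α : Type*}

def ReachesIn (r : α → α → Prop) : ℕ → α → α → Prop
  | 0 => Eq
  | n + 1 => Comp (ReachesIn r n) r

variable {r : α → α → Prop}

theorem reachesIn_one {a b : α} (h : r a b) : ReachesIn r 1 a b :=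
  ⟨a, rfl, h⟩

theorem ReachesIn.add {m n : ℕ} {a b c : α} (hab : ReachesIn r m a b)
    (hbc : ReachesIn r n b c) : ReachesIn r (m + n) a c := by
  induction n generalizing c with
  | zero => exact hbc ▸ hab
  | succ n ih =>
    obtain ⟨b', hbb', hb'c⟩ := hbc
    exact ⟨b', ih hbb', hb'c⟩

theorem ReflTransGen.exists_reachesIn {a b : α} (h : ReflTransGen r a b) :
    ∃ n, ReachesIn r n a b := by
  induction h with
  | refl => exact ⟨0, rfl⟩
  | tail _ hbc ih =>
    obtain ⟨n, hn⟩ := ih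
    exact ⟨n + 1, _, hn, hbc⟩

theorem ReachesIn.exists_chain {n : ℕ} {a b : α} (h : ReachesIn r n a b) :
    ∃ f : ℕ → α, f 0 = a ∧ f n = b ∧ ∀ i < n, r (f i) (f (i + 1)) := by
  induction n generalizing b with
  | zero => exact ⟨fun _ => a, rfl, h, by simp⟩
  | succ n ih =>
    obtain ⟨c, hac, hcb⟩ := h
    obtain ⟨f, hf0, hfn, hf⟩ := ih hac
    refine ⟨Function.update f (n + 1) b, by simp [hf0], by simp, fun i hi => ?_⟩
    rcases Nat.lt_succ_iff_lt_or_eq.1 hi with hi | rfl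
    · rw [Function.update_of_ne (by omega), Function.update_of_ne (by omega)]
      exact hf i hi
    · simpa [hfn] using hcb

variable (r) in
def returnLengths (a : α) : AddSubmonoid ℕ where
  carrier := {n | ReachesIn r n a a}
  zero_mem' := rfl
  add_mem' := ReachesIn.add

theorem exists_zmod_potential_of_dvd_returnLengths (hr : ∀ x y, ReflTransGen r x y) (a : α)
    {g : ℕ} (hg : ∀ n ∈ returnLengths r a, g ∣ n) :
    ∃ κ : α → ZMod g, ∀ x y, r x y → κ y = κ x + 1 := by
  choose ℓ hℓ using fun x => (hr a x).exists_reachesIn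
  choose ρ hρ using fun x => (hr x a).exists_reachesIn
  refine ⟨fun x => ℓ x, fun x y hxy => ?_⟩
  have h₁ : ((ℓ x + 1 + ρ y : ℕ) : ZMod g) = 0 :=
    (ZMod.natCast_eq_zero_iff _ _).2 (hg _ (((hℓ x).add (reachesIn_one hxy)).add (hρ y)))
  have h₂ : ((ℓ y + ρ y : ℕ) : ZMod g) = 0 :=
    (ZMod.natCast_eq_zero_iff _ _).2 (hg _ ((hℓ y).add (hρ y)))
  push_cast at h₁ h₂
  linear_combination h₂ - h₁

end Relation

theorem Nat.exists_forall_ge_mem_of_setGcd_eq_one {S : AddSubmonoid ℕ}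
    (h : Nat.setGcd S = 1) : ∃ N, ∀ n ≥ N, n ∈ S := by
  obtain ⟨N, hN⟩ := Nat.exists_mem_closure_of_ge (S : Set ℕ)
  exact ⟨N, fun n hn => by simpa using hN n hn (h ▸ one_dvd n)⟩

namespace SimpleGraph

variable {V : Type*} {Λ : SimpleGraph V}

theorem exists_adj_ne_ne [Λ.LocallyFinite] (hdeg : ∀ v, 3 ≤ Λ.degree v) (v p q : V) :
    ∃ w, Λ.Adj v w ∧ w ≠ p ∧ w ≠ q := by
  classical
  have hcard : ({p, q} : Finset V).card < (Λ.neighborFinset v).card :=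
    Finset.card_le_two.trans_lt (by rw [card_neighborFinset_eq_degree]; exact hdeg v)
  obtain ⟨w, hw, hwpq⟩ := Finset.exists_mem_notMem_of_card_lt_card hcard
  simp only [Finset.mem_insert, Finset.mem_singleton, not_or] at hwpq
  exact ⟨w, (mem_neighborFinset _ _ _).1 hw, hwpq⟩

theorem _root_.IsTwoDart.symm {x y : Λ.Dart} (h : IsTwoDart Λ x y) :
    IsTwoDart Λ y.symm x.symm :=
  ⟨h.1.symm, h.2.symm⟩

theorem exists_isTwoDart_ne [Λ.LocallyFinite] (hdeg : ∀ v, 3 ≤ Λ.degree v) (x d : Λ.Dart) :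
    ∃ y, IsTwoDart Λ x y ∧ y ≠ d := by
  obtain ⟨w, hw, hwx, hwd⟩ := exists_adj_ne_ne hdeg x.toProd.2 x.toProd.1 d.toProd.2
  exact ⟨⟨(x.toProd.2, w), hw⟩, ⟨rfl, hwx.symm⟩, fun h => hwd (congrArg (·.toProd.2) h)⟩

theorem reflTransGen_isTwoDart_symm [Finite V] [Λ.LocallyFinite]
    (hdeg : ∀ v, 3 ≤ Λ.degree v) (d : Λ.Dart) : ReflTransGen (IsTwoDart Λ) d d.symm := by
  classical
  -- `next` never returns to `d`; this handles a walk coming back to the head of `d`.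
  choose next hnext hne using fun x => exists_isTwoDart_ne hdeg x d
  set e : ℕ → Λ.Dart := fun k => next^[k] d
  have he_succ (k : ℕ) : e (k + 1) = next (e k) := Function.iterate_succ_apply' next k d
  have hstep (k : ℕ) : IsTwoDart Λ (e k) (e (k + 1)) := he_succ k ▸ hnext (e k)
  have hfwd (k : ℕ) : ReflTransGen (IsTwoDart Λ) d (e k) := by
    induction k with
    | zero => exact .refl
    | succ k ih => exact ih.tail (hstep k)
  have hbwd (k : ℕ) : ReflTransGen (IsTwoDart Λ) (e k).symm d.symm := by
    induction k with
    | zero => exact .refl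
    | succ k ih => exact ih.head (hstep k).symm
  have hrep : ∃ j, ∃ i < j, (e i).toProd.2 = (e j).toProd.2 := by
    obtain ⟨i, j, hij, h⟩ := Finite.exists_ne_map_eq_of_infinite fun k => (e k).toProd.2
    rcases hij.lt_or_gt with hij | hij
    · exact ⟨j, i, hij, h⟩
    · exact ⟨i, j, hij, h.symm⟩
  -- Turn around at the first repeated head: from `e (j + 1)` step onto the reverse of `e i`.
  obtain ⟨i, hij, hheads⟩ := Nat.find_spec hrep
  obtain ⟨j, hj⟩ : ∃ j, Nat.find hrep = j + 1 := Nat.exists_eq_succ_of_ne_zero (by omega)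
  rw [hj] at hij hheads
  have htails : (e (j + 1)).toProd.1 ≠ (e i).toProd.1 := by
    rw [(hstep j).1.symm]
    cases i with
    | zero =>
      intro h
      exact hne (e j) (he_succ j ▸ Dart.ext _ _ (Prod.ext ((hstep j).1.symm.trans h) hheads.symm))
    | succ i =>
      rw [(hstep i).1.symm]
      exact fun h => Nat.find_min hrep (hj ▸ Nat.lt_succ_self j) ⟨i, by omega, h.symm⟩
  exact ((hfwd (j + 1)).tail ⟨hheads.symm, htails⟩).trans (hbwd i)

theorem reflTransGen_isTwoDart_of_snd_eq_fst [Finite V] [Λ.LocallyFinite]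
    (hdeg : ∀ v, 3 ≤ Λ.degree v) {x y : Λ.Dart} (h : x.toProd.2 = y.toProd.1) :
    ReflTransGen (IsTwoDart Λ) x y := by
  by_cases hback : x.toProd.1 = y.toProd.2
  · obtain rfl : y = x.symm := Dart.ext _ _ (Prod.ext h.symm hback.symm)
    exact reflTransGen_isTwoDart_symm hdeg x
  · exact .single ⟨h, hback⟩

theorem reflTransGen_isTwoDart [Finite V] [Λ.LocallyFinite] (hconn : Λ.Preconnected)
    (hdeg : ∀ v, 3 ≤ Λ.degree v) (x y : Λ.Dart) : ReflTransGen (IsTwoDart Λ) x y := by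
  suffices ∀ {s t : V} (_ : Λ.Walk s t) (x y : Λ.Dart), x.toProd.2 = s → y.toProd.1 = t →
      ReflTransGen (IsTwoDart Λ) x y from
    this (hconn _ _).some x y rfl rfl
  intro s t p
  induction p with
  | nil => exact fun x y hx hy => reflTransGen_isTwoDart_of_snd_eq_fst hdeg (hx.trans hy.symm)
  | cons hadj _ ih =>
    intro x y hx hy
    exact (reflTransGen_isTwoDart_of_snd_eq_fst hdeg (y := ⟨(_, _), hadj⟩) hx).trans
      (ih _ y rfl hy)

theorem exists_adj_potential_of_isTwoDart_potential [Λ.LocallyFinite]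
    (hdeg : ∀ v, 3 ≤ Λ.degree v) {G : Type*} [AddGroup G] {t : G} {κ : Λ.Dart → G}
    (hκ : ∀ x y, IsTwoDart Λ x y → κ y = κ x + t) :
    ∃ χ : V → G, ∀ a b, Λ.Adj a b → χ b = χ a + t := by
  have hhead (x y : Λ.Dart) (hxy : x.toProd.2 = y.toProd.2) : κ x = κ y := by
    obtain ⟨w, hw, hwx, hwy⟩ := exists_adj_ne_ne hdeg x.toProd.2 x.toProd.1 y.toProd.1
    exact add_right_cancel
      ((hκ x ⟨(_, w), hw⟩ ⟨rfl, hwx.symm⟩).symm.trans (hκ y _ ⟨hxy.symm, hwy.symm⟩))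
  have hinto (v : V) : ∃ x : Λ.Dart, x.toProd.2 = v :=
    let ⟨w, hw, _⟩ := exists_adj_ne_ne hdeg v v v
    ⟨⟨(w, v), hw.symm⟩, rfl⟩
  choose into hinto using hinto
  refine ⟨fun v => κ (into v), fun a b hab => ?_⟩
  obtain ⟨c, hca, hcb, -⟩ := exists_adj_ne_ne hdeg a b b
  calc κ (into b) = κ ⟨(a, b), hab⟩ := hhead _ _ (hinto b)
    _ = κ ⟨(c, a), hca.symm⟩ + t := hκ _ _ ⟨rfl, hcb⟩
    _ = κ (into a) + t := by rw [hhead _ _ (hinto a).symm]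

theorem setGcd_returnLengths_isTwoDart_eq_one [Finite V] [Λ.LocallyFinite]
    (hconn : Λ.Preconnected) (hnbip : ¬ Λ.Colorable 2) (hdeg : ∀ v, 3 ≤ Λ.degree v)
    (u : Λ.Dart) : Nat.setGcd (returnLengths (IsTwoDart Λ) u) = 1 := by
  have potential {g : ℕ} (hg : g ∣ Nat.setGcd (returnLengths (IsTwoDart Λ) u)) :
      ∃ χ : V → ZMod g, ∀ a b, Λ.Adj a b → χ b = χ a + 1 :=
    let ⟨_, hκ⟩ := exists_zmod_potential_of_dvd_returnLengths
      (reflTransGen_isTwoDart hconn hdeg) u (Nat.dvd_setGcd_iff.1 hg)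
    exists_adj_potential_of_isTwoDart_potential hdeg hκ
  have hdvd : Nat.setGcd (returnLengths (IsTwoDart Λ) u) ∣ 2 := by
    obtain ⟨χ, hχ⟩ := potential dvd_rfl
    have hab := hχ _ _ u.adj
    have hba := hχ _ _ u.adj.symm
    refine (ZMod.natCast_eq_zero_iff _ _).1 ?_
    push_cast
    linear_combination -hab - hba
  rcases (Nat.dvd_prime Nat.prime_two).1 hdvd with h | h
  · exact h
  · -- `ZMod 2` is `Fin 2`, so `χ` is a 2-colouring.
    obtain ⟨χ, hχ⟩ := potential (dvd_of_eq h.symm)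
    exact absurd ⟨Coloring.mk χ fun hab heq => by simpa [heq] using hχ _ _ hab⟩ hnbip

end SimpleGraph

open SimpleGraph

/-- If `Λ` is a connected, non-bipartite finite simple graph of minimum degree
at least 3, then for any darts `x, w, y, z` of `Λ` there are directed walks in
the dart digraph `D(Λ)` from `x` to `w` and from `y` to `z` of equal length. -/
theorem dartDigraph_equal_length_walks {V : Type*} [Fintype V]
    (Λ : SimpleGraph V) [DecidableRel Λ.Adj] (hconn : Λ.Connected)
    (hnbip : ¬ Λ.Colorable 2) (hdeg : ∀ v : V, 3 ≤ Λ.degree v)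
    (x w y z : Λ.Dart) :
    ∃ (k : ℕ) (a b : ℕ → Λ.Dart),
      a 0 = x ∧ a k = w ∧ (∀ i < k, IsTwoDart Λ (a i) (a (i + 1))) ∧
      b 0 = y ∧ b k = z ∧ (∀ i < k, IsTwoDart Λ (b i) (b (i + 1))) := by
  obtain ⟨p, hp⟩ := (reflTransGen_isTwoDart hconn.preconnected hdeg x w).exists_reachesIn
  obtain ⟨q, hq⟩ := (reflTransGen_isTwoDart hconn.preconnected hdeg y z).exists_reachesIn
  obtain ⟨M, hM⟩ := Nat.exists_forall_ge_mem_of_setGcd_eq_one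
    (setGcd_returnLengths_isTwoDart_eq_one hconn.preconnected hnbip hdeg w)
  obtain ⟨N, hN⟩ := Nat.exists_forall_ge_mem_of_setGcd_eq_one
    (setGcd_returnLengths_isTwoDart_eq_one hconn.preconnected hnbip hdeg z)
  have hxw : ReachesIn (IsTwoDart Λ) (p + (q + M + N)) x w := hp.add (hM _ (by omega))
  have hyz : ReachesIn (IsTwoDart Λ) (p + (q + M + N)) y z := by
    rw [show p + (q + M + N) = q + (p + M + N) by omega]
    exact hq.add (hN _ (by omega))
  obtain ⟨a, ha0, hak, ha⟩ := hxw.exists_chain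
  obtain ⟨b, hb0, hbk, hb⟩ := hyz.exists_chain
  exact ⟨_, a, b, ha0, hak, ha, hb0, hbk, hb⟩
end

section
/- Let Λ be a finite simple graph in which every vertex has degree at least 3, and suppose Λ contains a cycle of length m. Then there exists a positive integer n such that Λ contains an arc-cycle of length n and an arc-cycle of length m + n − 2. -/
section

open Finset

variable {V : Type*} {Λ : SimpleGraph V}

def arcAppend (a : ℕ → V) (s : ℕ) (b : ℕ → V) : ℕ → V :=
  fun i => if i ≤ s then a i else b (i - s)

lemma arcAppend_of_le {a b : ℕ → V} {s i : ℕ} (hi : i ≤ s) : arcAppend a s b i = a i :=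
  if_pos hi

lemma arcAppend_of_ge {a b : ℕ → V} {s i : ℕ} (hab : b 0 = a s) (hi : s ≤ i) :
    arcAppend a s b i = b (i - s) := by
  unfold arcAppend
  split_ifs with h
  · obtain rfl : i = s := le_antisymm h hi
    rw [Nat.sub_self, hab]
  · rfl

lemma IsArc.append {a b : ℕ → V} {s t : ℕ} (ha : IsArc Λ s a) (hb : IsArc Λ t b)
    (hab : b 0 = a s) (hturn : b 1 ≠ a (s - 1)) : IsArc Λ (s + t) (arcAppend a s b) := by
  refine ⟨fun i hi => ?_, fun i hi => ?_⟩
  · rcases lt_or_ge i s with h | h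
    · rw [arcAppend_of_le h.le, arcAppend_of_le h]
      exact ha.1 i h
    · rw [arcAppend_of_ge hab h, arcAppend_of_ge hab (by omega),
        show i + 1 - s = i - s + 1 by omega]
      exact hb.1 _ (by omega)
  · rcases le_or_gt (i + 2) s with h | h
    · rw [arcAppend_of_le h, arcAppend_of_le (by omega)]
      exact ha.2 i h
    rcases le_or_gt s i with h' | h'
    · rw [arcAppend_of_ge hab h', arcAppend_of_ge hab (by omega),
        show i + 2 - s = i - s + 2 by omega]
      exact hb.2 _ (by omega)
    · obtain rfl : i = s - 1 := by omega
      rw [arcAppend_of_ge hab (by omega), arcAppend_of_le (by omega),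
        show s - 1 + 2 - s = 1 by omega]
      exact hturn

lemma IsArc.isArcCycle_append {a b : ℕ → V} {s t : ℕ} (ha : IsArc Λ s a) (hb : IsArc Λ t b)
    (hs : 1 ≤ s) (ht : 1 ≤ t) (hab : b 0 = a s) (hba : b t = a 0)
    (hturn : b 1 ≠ a (s - 1)) (hturn' : b (t - 1) ≠ a 1) :
    IsArcCycle Λ (s + t) (arcAppend a s b) := by
  refine ⟨by omega, ha.append hb hab hturn, ?_, ?_⟩
  · rw [arcAppend_of_ge hab (by omega), arcAppend_of_le (Nat.zero_le s),
      Nat.add_sub_cancel_left, hba]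
  · rw [arcAppend_of_ge hab (by omega), arcAppend_of_le hs, show s + t - 1 - s = t - 1 by omega]
    exact hturn'

namespace SimpleGraph

def Dart.toArc (d : Λ.Dart) : ℕ → V :=
  fun i => if i = 0 then d.fst else d.snd

@[simp]
lemma Dart.toArc_zero (d : Λ.Dart) : d.toArc 0 = d.fst := if_pos rfl

@[simp]
lemma Dart.toArc_one (d : Λ.Dart) : d.toArc 1 = d.snd := if_neg one_ne_zero

lemma Dart.isArc_toArc (d : Λ.Dart) : IsArc Λ 1 d.toArc := by
  refine ⟨fun i hi => ?_, fun i hi => by omega⟩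
  obtain rfl : i = 0 := by omega
  simp

lemma Walk.IsPath.isArc {u v : V} {p : Λ.Walk u v} (hp : p.IsPath) :
    IsArc Λ p.length p.getVert := by
  refine ⟨fun i hi => p.adj_getVert_succ hi, fun i hi h => ?_⟩
  have := hp.getVert_injOn (by simp only [Set.mem_ofPred_eq]; omega)
    (by simp only [Set.mem_ofPred_eq]; omega) h
  omega

def NonbacktrackingStep (Λ : SimpleGraph V) (d e : Λ.Dart) : Prop :=
  e.fst = d.snd ∧ e.snd ≠ d.fst

def NonbacktrackingReach (Λ : SimpleGraph V) : Λ.Dart → Λ.Dart → Prop :=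
  Relation.ReflTransGen (NonbacktrackingStep Λ)

lemma NonbacktrackingStep.symm {d e : Λ.Dart} (h : NonbacktrackingStep Λ d e) :
    NonbacktrackingStep Λ e.symm d.symm :=
  ⟨h.1.symm, h.2.symm⟩

lemma NonbacktrackingReach.exists_isArc {d e : Λ.Dart} (h : NonbacktrackingReach Λ d e) :
    ∃ (k : ℕ) (f : ℕ → V), IsArc Λ (k + 1) f ∧ f 0 = d.fst ∧ f 1 = d.snd ∧
      f k = e.fst ∧ f (k + 1) = e.snd := by
  induction h with
  | refl => exact ⟨0, d.toArc, d.isArc_toArc, by simp, by simp, by simp, by simp⟩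
  | @tail b c _ hbc ih =>
    obtain ⟨k, f, hf, hf0, hf1, hfk, hfk1⟩ := ih
    have hjoin : c.toArc 0 = f (k + 1) := by rw [Dart.toArc_zero, hfk1, hbc.1]
    refine ⟨k + 1, arcAppend f (k + 1) c.toArc,
      hf.append c.isArc_toArc hjoin (by simpa [hfk] using hbc.2), ?_, ?_, ?_, ?_⟩
    · rw [arcAppend_of_le (Nat.zero_le _), hf0]
    · rw [arcAppend_of_le (by omega), hf1]
    · rw [arcAppend_of_le le_rfl, hfk1, hbc.1]
    · rw [arcAppend_of_ge hjoin (by omega), show k + 1 + 1 - (k + 1) = 1 by omega,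
        Dart.toArc_one]

instance [DecidableEq V] : DecidableRel (NonbacktrackingStep Λ) :=
  fun _ _ => inferInstanceAs (Decidable (_ ∧ _))

lemma card_nonbacktrackingStep [Fintype V] [DecidableRel Λ.Adj] [DecidableEq V] (d : Λ.Dart) :
    #{e | NonbacktrackingStep Λ d e} = Λ.degree d.snd - 1 := by
  have : ({e | NonbacktrackingStep Λ d e} : Finset Λ.Dart) =
      ({e | e.fst = d.snd} : Finset Λ.Dart).erase d.symm := by
    ext e
    rw [mem_filter, mem_erase, mem_filter]
    simp only [mem_univ, true_and, NonbacktrackingStep, ne_eq,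
      Dart.ext_iff, Prod.ext_iff, Dart.symm_toProd, Prod.fst_swap, Prod.snd_swap]
    tauto
  rw [this, card_erase_of_mem (by simp), dart_fst_fiber_card_eq_degree]

lemma eq_empty_of_injOn_snd_of_two_le_successors [DecidableEq V] (T : Finset Λ.Dart)
    (hinj : Set.InjOn (fun e : Λ.Dart => e.snd) T)
    (hsucc : ∀ d ∈ T, 2 ≤ #(T.bipartiteAbove (NonbacktrackingStep Λ) d)) : T = ∅ := by
  have hpred : ∀ e ∈ T, #(T.bipartiteBelow (NonbacktrackingStep Λ) e) ≤ 1 := by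
    intro e _
    refine card_le_one.2 fun d hd d' hd' => ?_
    rw [mem_bipartiteBelow] at hd hd'
    exact hinj hd.1 hd'.1 (hd.2.1.symm.trans hd'.2.1)
  have := card_mul_le_card_mul _ hsucc hpred
  exact card_eq_zero.1 (by omega)

lemma nonbacktrackingReach_symm [Fintype V] [DecidableRel Λ.Adj]
    (hdeg : ∀ v, 3 ≤ Λ.degree v) (d : Λ.Dart) : NonbacktrackingReach Λ d d.symm := by
  classical
  by_contra hd
  obtain ⟨T, hmem⟩ : ∃ T : Finset Λ.Dart, ∀ e, e ∈ T ↔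
      NonbacktrackingReach Λ d e ∧ ¬NonbacktrackingReach Λ d e.symm :=
    ⟨({e | NonbacktrackingReach Λ d e ∧ ¬NonbacktrackingReach Λ d e.symm} : Finset Λ.Dart),
      fun e => by simp⟩
  have hinj : Set.InjOn (fun e : Λ.Dart => e.snd) T := by
    intro e he f hf hef
    by_contra hne
    have hstep : NonbacktrackingStep Λ f e.symm :=
      ⟨hef, fun h => hne (Dart.ext _ _ (Prod.ext h hef))⟩
    exact ((hmem e).1 he).2 (((hmem f).1 hf).1.tail hstep)
  have hsucc : ∀ e ∈ T, 2 ≤ #(T.bipartiteAbove (NonbacktrackingStep Λ) e) := by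
    intro e he
    have hall : T.bipartiteAbove (NonbacktrackingStep Λ) e =
        ({f | NonbacktrackingStep Λ e f} : Finset Λ.Dart) := by
      ext f
      rw [mem_bipartiteAbove, mem_filter_univ, hmem]
      exact and_iff_right_of_imp fun h =>
        ⟨((hmem e).1 he).1.tail h, fun hf => ((hmem e).1 he).2 (hf.tail h.symm)⟩
    rw [hall, card_nonbacktrackingStep]
    have := hdeg e.snd
    omega
  have hdT : d ∈ T := (hmem d).2 ⟨.refl, hd⟩
  simp [eq_empty_of_injOn_snd_of_two_le_successors T hinj hsucc] at hdT

lemma nonbacktrackingReach_of_fst_eq_snd [Fintype V] [DecidableRel Λ.Adj]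
    (hdeg : ∀ v, 3 ≤ Λ.degree v) {d e : Λ.Dart} (h : e.fst = d.snd) :
    NonbacktrackingReach Λ d e := by
  by_cases hback : e.snd = d.fst
  · obtain rfl : e = d.symm := Dart.ext _ _ (Prod.ext h hback)
    exact nonbacktrackingReach_symm hdeg d
  · exact .single ⟨h, hback⟩

lemma exists_adj_ne_ne_s13 [Fintype V] [DecidableRel Λ.Adj] {v : V} (hv : 3 ≤ Λ.degree v)
    (x y : V) : ∃ w, Λ.Adj v w ∧ w ≠ x ∧ w ≠ y := by
  classical
  have hcard : 0 < #(Λ.neighborFinset v \ {x, y}) := by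
    have := le_card_sdiff {x, y} (Λ.neighborFinset v)
    have := card_le_two (a := x) (b := y)
    rw [card_neighborFinset_eq_degree] at *
    omega
  obtain ⟨w, hw⟩ := card_pos.1 hcard
  simp only [mem_sdiff, mem_neighborFinset, mem_insert,
    mem_singleton, not_or] at hw
  exact ⟨w, hw.1, hw.2⟩

lemma exists_isArcCycle_pair_of_isArc_of_adj [Fintype V] [DecidableRel Λ.Adj]
    (hdeg : ∀ v, 3 ≤ Λ.degree v) {ℓ : ℕ} {g : ℕ → V} (hg : IsArc Λ ℓ g)
    (hadj : Λ.Adj (g ℓ) (g 0)) :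
    ∃ n, 0 < n ∧ (∃ a, IsArcCycle Λ n a) ∧ ∃ b, IsArcCycle Λ (ℓ + n - 1) b := by
  have hℓ : 1 ≤ ℓ := Nat.one_le_iff_ne_zero.2 fun h => hadj.ne (by rw [h])
  obtain ⟨s, hvs, hsu, hsg⟩ := exists_adj_ne_ne_s13 (hdeg (g ℓ)) (g 0) (g (ℓ - 1))
  obtain ⟨t, hut, htv, htg⟩ := exists_adj_ne_ne_s13 (hdeg (g 0)) (g ℓ) (g 1)
  have reach : ∀ {d e : Λ.Dart}, e.fst = d.snd → NonbacktrackingReach Λ d e :=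
    nonbacktrackingReach_of_fst_eq_snd hdeg
  -- along `(v, s), (s, v), (v, u), (u, t), (t, u)`, each dart leaving the head of the previous one
  have hreach : NonbacktrackingReach Λ ⟨(g ℓ, s), hvs⟩ ⟨(t, g 0), hut.symm⟩ :=
    ((reach (e := ⟨(s, g ℓ), hvs.symm⟩) rfl).trans (reach (e := ⟨(g ℓ, g 0), hadj⟩) rfl)).trans
      ((reach (e := ⟨(g 0, t), hut⟩) rfl).trans (reach rfl))
  obtain ⟨k, f, hf, hf0, hf1, hfk, hfk1⟩ := hreach.exists_isArc
  let closing : Λ.Dart := ⟨(g 0, g ℓ), hadj.symm⟩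
  have hA : IsArcCycle Λ (k + 1 + 1) (arcAppend f (k + 1) closing.toArc) :=
    hf.isArcCycle_append closing.isArc_toArc (by omega) le_rfl (by simp [closing, hfk1])
      (by simp [closing, hf0]) (by simpa [closing, hfk] using htv.symm)
      (by simpa [closing, hf1] using hsu.symm)
  have hB : IsArcCycle Λ (ℓ + (k + 1)) (arcAppend g ℓ f) :=
    hg.isArcCycle_append hf hℓ (by omega) hf0 hfk1 (by simpa [hf1] using hsg)
      (by simpa [hfk] using htg)
  exact ⟨k + 2, by omega, ⟨_, hA⟩, ⟨_, by rwa [show ℓ + (k + 2) - 1 = ℓ + (k + 1) by omega]⟩⟩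

end SimpleGraph

end

/-- Let `Λ` be a finite simple graph of minimum degree at least 3 containing a
cycle of length `m`. Then there is a positive integer `n` such that `Λ` has an
arc-cycle of length `n` and an arc-cycle of length `m + n - 2`. -/
theorem arcCycles_of_lengths_n_and_m_add_n_sub_two {V : Type*} [Fintype V]
    (Λ : SimpleGraph V) [DecidableRel Λ.Adj] (hdeg : ∀ v : V, 3 ≤ Λ.degree v)
    (m : ℕ) (hcyc : ∃ (v : V) (c : Λ.Walk v v), c.IsCycle ∧ c.length = m) :
    ∃ n : ℕ, 0 < n ∧ (∃ a : ℕ → V, IsArcCycle Λ n a) ∧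
      ∃ b : ℕ → V, IsArcCycle Λ (m + n - 2) b := by
  obtain ⟨v, c, hc, rfl⟩ := hcyc
  cases c with
  | nil => exact absurd hc SimpleGraph.Walk.not_isCycle_nil
  | cons h p =>
    have hp : p.IsPath := ((SimpleGraph.Walk.cons_isCycle_iff p h).1 hc).1
    obtain ⟨n, hn, hA, b, hB⟩ := SimpleGraph.exists_isArcCycle_pair_of_isArc_of_adj hdeg hp.isArc
      (by simpa using h)
    refine ⟨n, hn, hA, b, ?_⟩
    rwa [SimpleGraph.Walk.length_cons, show p.length + 1 + n - 2 = p.length + n - 1 by omega]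
end
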